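/- arXiv:1703.07170 — 4 statements merged into one kernel-verified Lean document; each statement's English description precedes it below -/
import Mathlib

section
/- Let x be a chain-point for the chain V_0 ⊊ V_1 ⊊ … ⊊ V_k, and suppose x = ε·y + (1−ε)·x' where y ∈ Sp_𝒞(G), x' ∈ Sp(G), and ε ∈ [0,1). Then x' is a chain-point for the subchain consisting of those sets V_i (i ∈ {0,1,…,k}) with x(δ(V_i)) < 2 − ε. -/
open Finset
open scoped Classical

variable {V : Type*} [Fintype V]

/-- The set of edges of `G` with one endpoint in `S₁` and the other in `S₂`. -/
noncomputable def cutBetween (G : SimpleGraph V) (S₁ S₂ : Finset V) : Finset (Sym2 V) :=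
  G.edgeFinset.filter (fun e => ∃ u v, e = s(u, v) ∧ u ∈ S₁ ∧ v ∈ S₂)

/-- The cut `δ(S)`: edges of `G` with exactly one endpoint in `S`. -/
noncomputable def cut (G : SimpleGraph V) (S : Finset V) : Finset (Sym2 V) :=
  cutBetween G S Sᶜ

/-- `E(S)`: edges of `G` with both endpoints in `S`. -/
noncomputable def inducedEdges (G : SimpleGraph V) (S : Finset V) : Finset (Sym2 V) :=
  G.edgeFinset.filter (fun e => ∀ v ∈ e, v ∈ S)

/-- `T` is the edge set of a spanning tree of `G`. -/
def IsSpanningTree (G : SimpleGraph V) (T : Finset (Sym2 V)) : Prop :=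
  (T : Set (Sym2 V)) ⊆ G.edgeSet ∧ (SimpleGraph.fromEdgeSet (T : Set (Sym2 V))).IsTree

/-- Characteristic vector of a set of edges. -/
noncomputable def chi (T : Finset (Sym2 V)) : Sym2 V → ℝ :=
  fun e => if e ∈ T then 1 else 0

/-- The spanning tree polytope `Sp(G)`. -/
noncomputable def spanningTreePolytope (G : SimpleGraph V) : Set (Sym2 V → ℝ) :=
  convexHull ℝ {x | ∃ T : Finset (Sym2 V), IsSpanningTree G T ∧ x = chi T}

/-- The level sets `L_i = V_i \ V_{i-1}` of a chain `V_0 ⊊ … ⊊ V_k` (with `V_{-1} = ∅`,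
`V_{k+1} = V`). -/
noncomputable def level (Vc : ℕ → Finset V) (k : ℕ) : ℕ → Finset V :=
  fun i => if i = 0 then Vc 0 else if i ≤ k then Vc i \ Vc (i - 1) else Finset.univ \ Vc k

/-- `x` is a chain-point for the chain `V_0 ⊊ … ⊊ V_k`. -/
def IsChainPoint (G : SimpleGraph V) (Vc : ℕ → Finset V) (k : ℕ) (x : Sym2 V → ℝ) : Prop :=
  x ∈ spanningTreePolytope G ∧
  (∑ e ∈ cut G (Vc 0), x e) = 1 ∧
  (∑ e ∈ cut G (Vc k), x e) = 1 ∧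
  (∀ i, 1 ≤ i → i ≤ k - 1 → (∑ e ∈ cut G (Vc i), x e) < 2) ∧
  (∀ i, 1 ≤ i → i ≤ k →
    (∑ v ∈ level Vc k i, ∑ e ∈ cut G {v}, x e) = 2 * ((level Vc k i).card : ℝ))

/-- A Gao-tree for the chain `V_0 ⊊ … ⊊ V_k`: a spanning tree meeting each cut `δ(V_i)`
in exactly one edge. -/
def IsGaoTree (G : SimpleGraph V) (Vc : ℕ → Finset V) (k : ℕ) (T : Finset (Sym2 V)) : Prop :=
  IsSpanningTree G T ∧ ∀ i ≤ k, (T ∩ cut G (Vc i)).card = 1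

/-- A Gao-tree for the subchain of `V_0 ⊊ … ⊊ V_k` given by the index set `I`. -/
def IsGaoTreeOn (G : SimpleGraph V) (Vc : ℕ → Finset V) (I : Finset ℕ)
    (T : Finset (Sym2 V)) : Prop :=
  IsSpanningTree G T ∧ ∀ i ∈ I, (T ∩ cut G (Vc i)).card = 1

/-- `Sp_𝒞(G)`: the convex hull of characteristic vectors of Gao-trees. -/
noncomputable def gaoPolytope (G : SimpleGraph V) (Vc : ℕ → Finset V) (k : ℕ) :
    Set (Sym2 V → ℝ) :=
  convexHull ℝ {x | ∃ T : Finset (Sym2 V), IsGaoTree G Vc k T ∧ x = chi T}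

/-- `F` is the edge set of a spanning tree of the induced subgraph `G(U)`. -/
def IsSpanningTreeOfInduced (G : SimpleGraph V) (U : Finset V) (F : Finset (Sym2 V)) : Prop :=
  (F : Set (Sym2 V)) ⊆ G.edgeSet ∧ (∀ e ∈ F, ∀ v ∈ e, v ∈ U) ∧
  F.card = U.card - 1 ∧
  ∀ u ∈ U, ∀ v ∈ U, (SimpleGraph.fromEdgeSet (F : Set (Sym2 V))).Reachable u v

/-- The rank of `X` in the cycle matroid of `G`. -/
noncomputable def cycleRank (G : SimpleGraph V) (X : Finset (Sym2 V)) : ℕ :=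
  (G.edgeFinset.powerset.filter (fun T => IsSpanningTree G T)).sup (fun T => (T ∩ X).card)

/-- The rank of `X` in the matroid whose bases are the Gao-trees. -/
noncomputable def gaoRank (G : SimpleGraph V) (Vc : ℕ → Finset V) (k : ℕ)
    (X : Finset (Sym2 V)) : ℕ :=
  (G.edgeFinset.powerset.filter (fun T => IsGaoTree G Vc k T)).sup (fun T => (T ∩ X).card)

/-- `x` is a solution of the `s`–`t` path TSP subtour elimination LP. -/
def IsSubtourLPSolution (G : SimpleGraph V) (s t : V) (x : Sym2 V → ℝ) : Prop :=
  x ∈ spanningTreePolytope G ∧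
  (∀ v, v ≠ s → v ≠ t → (∑ e ∈ cut G {v}, x e) = 2) ∧
  (∑ e ∈ cut G {s}, x e) = 1 ∧ (∑ e ∈ cut G {t}, x e) = 1

/-- Rank function of a matroid on a finite ground set, as a function on finsets. -/
noncomputable def mrank {E : Type*} [Fintype E] (M : Matroid E) (X : Finset E) : ℕ :=
  (X.powerset.filter (fun I : Finset E => M.Indep (I : Set E))).sup Finset.card

/-- Convex hull of characteristic vectors of independent sets of a matroid. -/
noncomputable def indepPolytope {E : Type*} [Fintype E] (M : Matroid E) : Set (E → ℝ) :=
  convexHull ℝ {x | ∃ I : Finset E, M.Indep (I : Set E) ∧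
    x = fun e => if e ∈ I then (1 : ℝ) else 0}

section Aux
open SimpleGraph
set_option linter.unusedSectionVars false

lemma mem_cut_iff (G : SimpleGraph V) (S : Finset V) {u w : V} (h : G.Adj u w) :
    s(u, w) ∈ cut G S ↔ (u ∈ S ∧ w ∉ S) ∨ (w ∈ S ∧ u ∉ S) := by
  simp only [cut, cutBetween, mem_filter, SimpleGraph.mem_edgeFinset,
    SimpleGraph.mem_edgeSet, Finset.mem_compl]
  constructor
  · rintro ⟨-, a, b, hab, ha, hb⟩
    rw [Sym2.eq_iff] at hab
    rcases hab with ⟨rfl, rfl⟩ | ⟨rfl, rfl⟩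
    · exact Or.inl ⟨ha, hb⟩
    · exact Or.inr ⟨ha, hb⟩
  · rintro (⟨h1, h2⟩ | ⟨h1, h2⟩)
    · exact ⟨h, u, w, rfl, h1, by simpa using h2⟩
    · exact ⟨h, w, u, Sym2.eq_swap, h1, by simpa using h2⟩

lemma mem_cut_singleton_iff (G : SimpleGraph V) (v : V) {u w : V} (h : G.Adj u w) :
    s(u, w) ∈ cut G {v} ↔ u = v ∨ w = v := by
  rw [mem_cut_iff G _ h]
  have := h.ne
  simp only [Finset.mem_singleton]
  constructor
  · rintro (⟨h1, -⟩ | ⟨h1, -⟩) <;> [exact Or.inl h1; exact Or.inr h1]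
  · rintro (rfl | rfl)
    · exact Or.inl ⟨rfl, fun hc => this hc.symm⟩
    · exact Or.inr ⟨rfl, fun hc => this hc⟩

lemma mem_inducedEdges_iff (G : SimpleGraph V) (S : Finset V) {u w : V} (h : G.Adj u w) :
    s(u, w) ∈ inducedEdges G S ↔ u ∈ S ∧ w ∈ S := by
  simp only [inducedEdges, mem_filter, SimpleGraph.mem_edgeFinset, SimpleGraph.mem_edgeSet,
    Sym2.mem_iff, forall_eq_or_imp, forall_eq]
  tauto

lemma not_mem_cut_of_not_mem_edgeFinset (G : SimpleGraph V) (S : Finset V) {e : Sym2 V}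
    (h : e ∉ G.edgeFinset) : e ∉ cut G S := fun hc => h (mem_filter.1 hc).1

/-- Equality of a linear functional on a convex hull. -/
lemma hull_fun_eq {α : Type*} [Fintype α] {A : Set (α → ℝ)} {x : α → ℝ}
    (hx : x ∈ convexHull ℝ A) (f : (α → ℝ) → ℝ) (hf : IsLinearMap ℝ f) (c : ℝ)
    (hA : ∀ a ∈ A, f a = c) : f x = c := by
  have : convexHull ℝ A ⊆ {z | f z = c} :=
    convexHull_min (fun a ha => hA a ha) (convex_hyperplane hf c)
  exact this hx

lemma isLinearMap_sumOver {α : Type*} [Fintype α] (F : Finset α) :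
    IsLinearMap ℝ (fun x : α → ℝ => ∑ e ∈ F, x e) := by
  constructor
  · intro a b; simp [Finset.sum_add_distrib]
  · intro c a; simp [Finset.mul_sum]

lemma isLinearMap_doubleSum {α β : Type*} [Fintype α] (S : Finset β) (F : β → Finset α) :
    IsLinearMap ℝ (fun x : α → ℝ => ∑ v ∈ S, ∑ e ∈ F v, x e) := by
  constructor
  · intro a b; simp [Finset.sum_add_distrib]
  · intro c a; simp [Finset.mul_sum]

lemma sum_chi (T F : Finset (Sym2 V)) : ∑ e ∈ F, chi T e = ((T ∩ F).card : ℝ) := by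
  simp only [chi, Finset.sum_ite_mem]
  rw [Finset.inter_comm]
  simp

lemma card_inter_eq_sum (T X : Finset (Sym2 V)) :
    (T ∩ X).card = ∑ e ∈ T, if e ∈ X then 1 else 0 := by
  have : T ∩ X = T.filter (fun e => e ∈ X) := by
    ext e; simp [and_comm]
  rw [this, Finset.card_filter]

lemma per_edge_deg (G : SimpleGraph V) (U : Finset V) {u w : V} (h : G.Adj u w) :
    (∑ v ∈ U, if s(u, w) ∈ cut G {v} then (1 : ℕ) else 0)
      = 2 * (if s(u, w) ∈ inducedEdges G U then 1 else 0)
        + (if s(u, w) ∈ cut G U then 1 else 0) := by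
  have hne := h.ne
  have hL : (∑ v ∈ U, if s(u, w) ∈ cut G {v} then (1 : ℕ) else 0)
      = (if u ∈ U then 1 else 0) + (if w ∈ U then 1 else 0) := by
    have : ∀ v ∈ U, (if s(u, w) ∈ cut G {v} then (1 : ℕ) else 0)
        = (if u = v then 1 else 0) + (if w = v then 1 else 0) := by
      intro v _
      simp only [mem_cut_singleton_iff G v h]
      by_cases h1 : u = v <;> by_cases h2 : w = v <;> simp_all
    rw [Finset.sum_congr rfl this, Finset.sum_add_distrib,
      Finset.sum_ite_eq U u (fun _ => 1), Finset.sum_ite_eq U w (fun _ => 1)]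
  rw [hL]
  simp only [mem_inducedEdges_iff G U h, mem_cut_iff G U h]
  by_cases h1 : u ∈ U <;> by_cases h2 : w ∈ U <;> simp_all
  
lemma sum_deg_eq (G : SimpleGraph V) (T : Finset (Sym2 V)) (hT : T ⊆ G.edgeFinset)
    (U : Finset V) :
    ∑ v ∈ U, (T ∩ cut G {v}).card
      = 2 * (T ∩ inducedEdges G U).card + (T ∩ cut G U).card := by
  have swap : ∑ v ∈ U, (T ∩ cut G {v}).card
      = ∑ e ∈ T, ∑ v ∈ U, if e ∈ cut G {v} then 1 else 0 := by
    rw [← Finset.sum_comm]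
    exact Finset.sum_congr rfl fun v _ => card_inter_eq_sum T _
  rw [swap, card_inter_eq_sum, card_inter_eq_sum, Finset.mul_sum, ← Finset.sum_add_distrib]
  refine Finset.sum_congr rfl fun e he => ?_
  induction e using Sym2.ind with
  | _ u w => exact per_edge_deg G U (by simpa using (SimpleGraph.mem_edgeFinset.1 (hT he)))

lemma partition_edges (G : SimpleGraph V) (T : Finset (Sym2 V)) (hT : T ⊆ G.edgeFinset)
    (U : Finset V) :
    T.card = (T ∩ inducedEdges G U).card + (T ∩ cut G U).card
      + (T ∩ inducedEdges G Uᶜ).card := by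
  rw [card_inter_eq_sum, card_inter_eq_sum, card_inter_eq_sum, ← Finset.sum_add_distrib,
    ← Finset.sum_add_distrib, Finset.card_eq_sum_ones]
  refine Finset.sum_congr rfl fun e he => ?_
  induction e using Sym2.ind with
  | _ u w =>
  have h : G.Adj u w := by simpa using (SimpleGraph.mem_edgeFinset.1 (hT he))
  simp only [mem_inducedEdges_iff G U h, mem_cut_iff G U h, mem_inducedEdges_iff G Uᶜ h,
    Finset.mem_compl]
  by_cases h1 : u ∈ U <;> by_cases h2 : w ∈ U <;> simp_all

lemma claimB (H : SimpleGraph V) (hH : H.IsTree) (r : V)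
    (pth : (v : V) → H.Walk v r) (hpath : ∀ v, (pth v).IsPath)
    (huniq : ∀ v (q : H.Walk v r), q.IsPath → q = pth v)
    {u w : V} (h : H.Adj u w) :
    (pth u).edges.head? = some s(u, w) ∨ (pth w).edges.head? = some s(u, w) := by
  by_cases hu : u ∈ (pth w).support
  · right
    have ht : ((pth w).takeUntil u hu).IsPath := (hpath w).takeUntil hu
    have hsingle : (Walk.cons h.symm Walk.nil : H.Walk w u).IsPath := by
      rw [Walk.cons_isPath_iff]
      simp [h.ne']
    have heq : (pth w).takeUntil u hu = Walk.cons h.symm Walk.nil :=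
      (hH.existsUnique_path w u).unique ht hsingle
    conv_lhs => rw [← (pth w).take_spec hu]
    rw [Walk.edges_append, heq]
    simp [Sym2.eq_swap]
  · left
    have hp : (Walk.cons h (pth w)).IsPath := (hpath w).cons hu
    rw [← huniq u (Walk.cons h (pth w)) hp]
    simp [Walk.edges_cons]

lemma tree_bound (H : SimpleGraph V) (hH : H.IsTree) (U : Finset V) (hU : U.Nonempty)
    (r : V) (hr : r ∉ U) (F : Finset (Sym2 V))
    (hF : ∀ e ∈ F, e ∈ H.edgeSet ∧ ∀ v ∈ e, v ∈ U) :
    F.card + 1 ≤ U.card := by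
  classical
  choose pth hpath huniq using (hH.existsUnique_path · r)
  obtain ⟨u0, hu0U, hu0min⟩ := Finset.exists_min_image U (fun v => (pth v).length) hU
  set f : Sym2 V → V := fun e =>
    if h : ∃ v, v ∈ e ∧ (pth v).edges.head? = some e then h.choose else r with hf
  have hex : ∀ e ∈ F, ∃ v, v ∈ e ∧ (pth v).edges.head? = some e := by
    intro e he
    induction e using Sym2.ind with
    | _ u w =>
      have hadj : H.Adj u w := (hF _ he).1
      rcases claimB H hH r pth hpath huniq hadj with hc | hc
      · exact ⟨u, Sym2.mem_mk_left u w, hc⟩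
      · exact ⟨w, Sym2.mem_mk_right u w, hc⟩
  have hspec : ∀ e ∈ F, f e ∈ e ∧ (pth (f e)).edges.head? = some e := by
    intro e he
    have h := hex e he
    rw [hf]
    dsimp only
    rw [dif_pos h]
    exact h.choose_spec
  have hmaps : ∀ e ∈ F, f e ∈ U.erase u0 := by
    intro e he
    obtain ⟨hmem, hhead⟩ := hspec e he
    refine Finset.mem_erase.2 ⟨?_, (hF e he).2 _ hmem⟩
    intro hfe
    rw [hfe] at hhead hmem
    have hne : u0 ≠ r := fun hc => hr (hc ▸ hu0U)
    obtain ⟨w', hadj, q, hq⟩ := Walk.exists_eq_cons_of_ne hne (pth u0)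
    rw [hq] at hhead
    simp only [Walk.edges_cons, List.head?_cons] at hhead
    have he' : e = s(u0, w') := (Option.some.inj hhead).symm
    have hqpath : q.IsPath := by
      have := hpath u0
      rw [hq] at this
      exact this.of_cons
    have hqe : q = pth w' := huniq w' q hqpath
    have hlen : (pth u0).length = (pth w').length + 1 := by
      rw [hq, Walk.length_cons, hqe]
    have hw'U : w' ∈ U := (hF e he).2 w' (by rw [he']; exact Sym2.mem_mk_right u0 w')
    have := hu0min w' hw'U
    omega
  have hinj : ∀ e₁ ∈ F, ∀ e₂ ∈ F, f e₁ = f e₂ → e₁ = e₂ := by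
    intro e₁ h₁ e₂ h₂ hfe
    have s₁ := (hspec e₁ h₁).2
    have s₂ := (hspec e₂ h₂).2
    rw [hfe] at s₁
    rw [s₁] at s₂
    exact (Option.some.inj s₂)
  have hcard := Finset.card_le_card_of_injOn f hmaps hinj
  rw [Finset.card_erase_of_mem hu0U] at hcard
  have := Finset.card_pos.2 hU
  omega

lemma sym2_exists_rep (e : Sym2 V) : ∃ u w, e = s(u, w) := by
  induction e using Sym2.ind with
  | _ x y => exact ⟨x, y, rfl⟩

lemma P1 (G : SimpleGraph V) (T : Finset (Sym2 V)) (hT : T ⊆ G.edgeFinset)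
    (Va Vb : Finset V) (hab : Va ⊆ Vb) :
    (T ∩ inducedEdges G Vb).card
      = (T ∩ inducedEdges G Va).card + (T ∩ inducedEdges G (Vb \ Va)).card
        + (T ∩ (inducedEdges G Vb ∩ cut G Va)).card := by
  rw [card_inter_eq_sum, card_inter_eq_sum, card_inter_eq_sum, card_inter_eq_sum,
    ← Finset.sum_add_distrib, ← Finset.sum_add_distrib]
  refine Finset.sum_congr rfl fun e he => ?_
  obtain ⟨u, w, rfl⟩ := sym2_exists_rep e
  have h : G.Adj u w := by simpa using (SimpleGraph.mem_edgeFinset.1 (hT he))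
  simp only [Finset.mem_inter, mem_inducedEdges_iff G _ h, mem_cut_iff G _ h,
    Finset.mem_sdiff]
  have h1 := @hab u
  have h2 := @hab w
  by_cases hu1 : u ∈ Va <;> by_cases hw1 : w ∈ Va <;> by_cases hu2 : u ∈ Vb <;>
    by_cases hw2 : w ∈ Vb <;> simp_all

lemma P2 (G : SimpleGraph V) (T : Finset (Sym2 V)) (hT : T ⊆ G.edgeFinset)
    (Va Vb : Finset V) (hab : Va ⊆ Vb) :
    (T ∩ cut G (Vb \ Va)).card
      = (T ∩ (inducedEdges G Vb ∩ cut G Va)).card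
        + (T ∩ (cut G Vb ∩ cut G (Vb \ Va))).card := by
  rw [card_inter_eq_sum, card_inter_eq_sum, card_inter_eq_sum, ← Finset.sum_add_distrib]
  refine Finset.sum_congr rfl fun e he => ?_
  obtain ⟨u, w, rfl⟩ := sym2_exists_rep e
  have h : G.Adj u w := by simpa using (SimpleGraph.mem_edgeFinset.1 (hT he))
  simp only [Finset.mem_inter, mem_inducedEdges_iff G _ h, mem_cut_iff G _ h,
    Finset.mem_sdiff]
  have h1 := @hab u
  have h2 := @hab w
  by_cases hu1 : u ∈ Va <;> by_cases hw1 : w ∈ Va <;> by_cases hu2 : u ∈ Vb <;>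
    by_cases hw2 : w ∈ Vb <;> simp_all

lemma key_ts (G : SimpleGraph V) (T : Finset (Sym2 V)) (hT : T ⊆ G.edgeFinset)
    (Va Vb : Finset V) (hab : Va ⊆ Vb) (ea eb : Sym2 V)
    (hea : T ∩ cut G Va = {ea}) (heb : T ∩ cut G Vb = {eb}) :
    (T ∩ (inducedEdges G Vb ∩ cut G Va)).card
      = (T ∩ (cut G Vb ∩ cut G (Vb \ Va))).card := by
  have heaT : ea ∈ T ∧ ea ∈ cut G Va := by
    have : ea ∈ T ∩ cut G Va := by rw [hea]; exact Finset.mem_singleton_self ea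
    exact Finset.mem_inter.1 this
  have hebT : eb ∈ T ∧ eb ∈ cut G Vb := by
    have : eb ∈ T ∩ cut G Vb := by rw [heb]; exact Finset.mem_singleton_self eb
    exact Finset.mem_inter.1 this
  have hset1 : T ∩ (inducedEdges G Vb ∩ cut G Va) = {ea} ∩ inducedEdges G Vb := by
    rw [← hea]; ext e; simp only [Finset.mem_inter]; tauto
  have hset2 : T ∩ (cut G Vb ∩ cut G (Vb \ Va)) = {eb} ∩ cut G (Vb \ Va) := by
    rw [← heb]; ext e; simp only [Finset.mem_inter]; tauto
  -- claim 1 : ea ∈ inducedEdges G Vb ↔ ea ≠ eb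
  have claim1 : ea ∈ inducedEdges G Vb ↔ ea ≠ eb := by
    obtain ⟨u, w, huw⟩ := sym2_exists_rep ea
    subst huw
    have h : G.Adj u w := by simpa using (SimpleGraph.mem_edgeFinset.1 (hT heaT.1))
    rw [mem_inducedEdges_iff G _ h]
    rcases (mem_cut_iff G Va h).1 heaT.2 with ⟨hu, hw⟩ | ⟨hw, hu⟩
    · constructor
      · rintro ⟨-, hwb⟩ rfl
        rcases (mem_cut_iff G Vb h).1 hebT.2 with ⟨-, hc⟩ | ⟨-, hc⟩
        · exact hc hwb
        · exact hc (hab hu)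
      · intro hne
        refine ⟨hab hu, ?_⟩
        by_contra hwb
        have : s(u, w) ∈ T ∩ cut G Vb := by
          rw [Finset.mem_inter]
          exact ⟨heaT.1, (mem_cut_iff G Vb h).2 (Or.inl ⟨hab hu, hwb⟩)⟩
        rw [heb, Finset.mem_singleton] at this
        exact hne this
    · constructor
      · rintro ⟨hub, -⟩ rfl
        rcases (mem_cut_iff G Vb h).1 hebT.2 with ⟨-, hc⟩ | ⟨-, hc⟩
        · exact hc (hab hw)
        · exact hc hub
      · intro hne
        refine ⟨?_, hab hw⟩
        by_contra hub
        have : s(u, w) ∈ T ∩ cut G Vb := by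
          rw [Finset.mem_inter]
          exact ⟨heaT.1, (mem_cut_iff G Vb h).2 (Or.inr ⟨hab hw, hub⟩)⟩
        rw [heb, Finset.mem_singleton] at this
        exact hne this
  have claim2 : eb ∈ cut G (Vb \ Va) ↔ ea ≠ eb := by
    obtain ⟨u, w, huw⟩ := sym2_exists_rep eb
    subst huw
    have h : G.Adj u w := by simpa using (SimpleGraph.mem_edgeFinset.1 (hT hebT.1))
    rw [mem_cut_iff G _ h]
    simp only [Finset.mem_sdiff]
    rcases (mem_cut_iff G Vb h).1 hebT.2 with ⟨hu, hw⟩ | ⟨hw, hu⟩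
    · constructor
      · rintro (⟨⟨-, hua⟩, -⟩ | ⟨⟨hwb, -⟩, -⟩)
        · intro heq
          rw [heq] at heaT
          rcases (mem_cut_iff G Va h).1 heaT.2 with ⟨hc, -⟩ | ⟨hc, -⟩
          · exact hua hc
          · exact hw (hab hc)
        · exact absurd hwb hw
      · intro hne
        left
        refine ⟨⟨hu, ?_⟩, fun hc => hw hc.1⟩
        intro hua
        have : s(u, w) ∈ T ∩ cut G Va := by
          rw [Finset.mem_inter]
          refine ⟨hebT.1, (mem_cut_iff G Va h).2 (Or.inl ⟨hua, fun hc => hw (hab hc)⟩)⟩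
        rw [hea, Finset.mem_singleton] at this
        exact hne this.symm
    · constructor
      · rintro (⟨⟨hub, -⟩, -⟩ | ⟨⟨-, hwa⟩, -⟩)
        · exact absurd hub hu
        · intro heq
          rw [heq] at heaT
          rcases (mem_cut_iff G Va h).1 heaT.2 with ⟨hc, -⟩ | ⟨hc, -⟩
          · exact hu (hab hc)
          · exact hwa hc
      · intro hne
        right
        refine ⟨⟨hw, ?_⟩, fun hc => hu hc.1⟩
        intro hwa
        have : s(u, w) ∈ T ∩ cut G Va := by
          rw [Finset.mem_inter]
          refine ⟨hebT.1, (mem_cut_iff G Va h).2 (Or.inr ⟨hwa, fun hc => hu (hab hc)⟩)⟩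
        rw [hea, Finset.mem_singleton] at this
        exact hne this.symm
  rw [hset1, hset2]
  by_cases hne : ea = eb
  · rw [Finset.singleton_inter_of_notMem (fun hc => (claim1.1 hc) hne),
      Finset.singleton_inter_of_notMem (fun hc => (claim2.1 hc) hne)]
  · rw [Finset.singleton_inter_of_mem (claim1.2 hne),
      Finset.singleton_inter_of_mem (claim2.2 hne)]
    simp

lemma edgeFinset_fromEdgeSet_of_subset (G : SimpleGraph V) (T : Finset (Sym2 V))
    (hsub : (T : Set (Sym2 V)) ⊆ G.edgeSet) :
    (SimpleGraph.fromEdgeSet (T : Set (Sym2 V))).edgeFinset = T := by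
  ext e
  rw [SimpleGraph.mem_edgeFinset, SimpleGraph.edgeSet_fromEdgeSet]
  constructor
  · rintro ⟨he, -⟩; exact_mod_cast he
  · intro he
    exact ⟨by exact_mod_cast he, G.not_isDiag_of_mem_edgeSet (hsub he)⟩

/-- Tightness: if the cut has one tree edge, the tree restricted to `U` is spanning. -/
lemma tight (G : SimpleGraph V) (T : Finset (Sym2 V))
    (hsub : (T : Set (Sym2 V)) ⊆ G.edgeSet)
    (hTree : (SimpleGraph.fromEdgeSet (T : Set (Sym2 V))).IsTree)
    (U : Finset V) (hU : U.Nonempty) (hUc : Uᶜ.Nonempty)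
    (hcut : (T ∩ cut G U).card = 1) :
    (T ∩ inducedEdges G U).card + 1 = U.card := by
  have hT : T ⊆ G.edgeFinset := fun e he => SimpleGraph.mem_edgeFinset.2 (hsub he)
  set H := SimpleGraph.fromEdgeSet (T : Set (Sym2 V)) with hH
  have hTcard : T.card + 1 = Fintype.card V := by
    have := hTree.card_edgeFinset
    rwa [edgeFinset_fromEdgeSet_of_subset G T hsub] at this
  have hmemH : ∀ e ∈ T, e ∈ H.edgeSet := by
    intro e he
    rw [hH, SimpleGraph.edgeSet_fromEdgeSet]
    exact ⟨by exact_mod_cast he, G.not_isDiag_of_mem_edgeSet (hsub he)⟩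
  obtain ⟨r, hrc⟩ := id hUc
  obtain ⟨r', hr'⟩ := id hU
  have hb1 : (T ∩ inducedEdges G U).card + 1 ≤ U.card := by
    refine tree_bound H hTree U hU r (Finset.mem_compl.1 hrc) _ ?_
    intro e he
    rw [Finset.mem_inter] at he
    exact ⟨hmemH e he.1, fun v hv => (Finset.mem_filter.1 he.2).2 v hv⟩
  have hb2 : (T ∩ inducedEdges G Uᶜ).card + 1 ≤ Uᶜ.card := by
    refine tree_bound H hTree Uᶜ hUc r' (by simp [hr']) _ ?_
    intro e he
    rw [Finset.mem_inter] at he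
    exact ⟨hmemH e he.1, fun v hv => (Finset.mem_filter.1 he.2).2 v hv⟩
  have hpart := partition_edges G T hT U
  have hcompl : Uᶜ.card = Fintype.card V - U.card := Finset.card_compl U
  have hUle : U.card ≤ Fintype.card V := Finset.card_le_univ U
  omega

lemma gao_deg (G : SimpleGraph V) (T : Finset (Sym2 V))
    (hsub : (T : Set (Sym2 V)) ⊆ G.edgeSet)
    (hTree : (SimpleGraph.fromEdgeSet (T : Set (Sym2 V))).IsTree)
    (Va Vb : Finset V) (hab : Va ⊆ Vb) (hVa : Va.Nonempty) (hVbc : Vbᶜ.Nonempty)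
    (hca : (T ∩ cut G Va).card = 1) (hcb : (T ∩ cut G Vb).card = 1) :
    ∑ v ∈ Vb \ Va, (T ∩ cut G {v}).card = 2 * (Vb \ Va).card := by
  have hT : T ⊆ G.edgeFinset := fun e he => SimpleGraph.mem_edgeFinset.2 (hsub he)
  have hVb : Vb.Nonempty := hVa.mono hab
  have hVac : Vaᶜ.Nonempty := hVbc.mono (Finset.compl_subset_compl.2 hab)
  have ta := tight G T hsub hTree Va hVa hVac hca
  have tb := tight G T hsub hTree Vb hVb hVbc hcb
  obtain ⟨ea, hea⟩ := Finset.card_eq_one.1 hca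
  obtain ⟨eb, heb⟩ := Finset.card_eq_one.1 hcb
  have hp1 := P1 G T hT Va Vb hab
  have hp2 := P2 G T hT Va Vb hab
  have hts := key_ts G T hT Va Vb hab ea eb hea heb
  have hsd := sum_deg_eq G T hT (Vb \ Va)
  have hcards : (Vb \ Va).card + Va.card = Vb.card := Finset.card_sdiff_add_card_eq_card hab
  omega

end Aux

theorem stmt1 (G : SimpleGraph V) (hG : G.Connected)
    (Vc : ℕ → Finset V) (k : ℕ)
    (hne : (Vc 0).Nonempty) (hchain : ∀ i < k, Vc i ⊂ Vc (i + 1))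
    (htop : Vc k ⊂ Finset.univ)
    (x y x' : Sym2 V → ℝ) (ε : ℝ) (hε0 : 0 ≤ ε) (hε1 : ε < 1)
    (hx : IsChainPoint G Vc k x)
    (hy : y ∈ gaoPolytope G Vc k)
    (hx' : x' ∈ spanningTreePolytope G)
    (hcomb : x = fun e => ε * y e + (1 - ε) * x' e) :
    ∃ (m : ℕ) (σ : ℕ → ℕ),
      (∀ j < m, σ j < σ (j + 1)) ∧
      (∀ j ≤ m, σ j ≤ k ∧ (∑ e ∈ cut G (Vc (σ j)), x e) < 2 - ε) ∧
      (∀ i ≤ k, (∑ e ∈ cut G (Vc i), x e) < 2 - ε → ∃ j ≤ m, σ j = i) ∧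
      IsChainPoint G (fun j => Vc (σ j)) m x' := by
  classical
  obtain ⟨hxSp, hx0, hxk, hxmid, hxlev⟩ := hx
  have h1pos : (0:ℝ) < 1 - ε := by linarith
  -- chain monotonicity
  have hmono : ∀ i j, i ≤ j → j ≤ k → Vc i ⊆ Vc j := by
    have key : ∀ d i, i + d ≤ k → Vc i ⊆ Vc (i + d) := by
      intro d
      induction d with
      | zero => intro i _; exact Finset.Subset.refl _
      | succ d ih =>
        intro i hik
        have h1 : Vc i ⊆ Vc (i + d) := ih i (by omega)
        have h2 : Vc (i + d) ⊆ Vc (i + d + 1) := (hchain (i + d) (by omega)).subset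
        exact h1.trans h2
    intro i j hij hjk
    have := key (j - i) i (by omega)
    rwa [show i + (j - i) = j by omega] at this
  -- the index set of the subchain
  set I : Finset ℕ := (Finset.range (k+1)).filter
    (fun i => (∑ e ∈ cut G (Vc i), x e) < 2 - ε) with hI
  have h0I : 0 ∈ I := by
    rw [hI, Finset.mem_filter, Finset.mem_range]
    exact ⟨by omega, by rw [hx0]; linarith⟩
  have hkI : k ∈ I := by
    rw [hI, Finset.mem_filter, Finset.mem_range]
    exact ⟨by omega, by rw [hxk]; linarith⟩
  have hIk : ∀ i ∈ I, i ≤ k ∧ (∑ e ∈ cut G (Vc i), x e) < 2 - ε := by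
    intro i hi
    rw [hI, Finset.mem_filter, Finset.mem_range] at hi
    exact ⟨by omega, hi.2⟩
  have hIcard : 0 < I.card := Finset.card_pos.2 ⟨0, h0I⟩
  set m := I.card - 1 with hm
  set emb := I.orderEmbOfFin (rfl : I.card = I.card) with hemb
  set σ : ℕ → ℕ := fun j => emb ⟨min j m, by omega⟩ with hσ
  have hσI : ∀ j, σ j ∈ I := fun j => I.orderEmbOfFin_mem rfl _
  have hσmono : ∀ j < m, σ j < σ (j+1) := by
    intro j hj
    have hlt : (⟨min j m, by omega⟩ : Fin I.card) < ⟨min (j+1) m, by omega⟩ := by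
      simp only [Fin.mk_lt_mk]
      omega
    exact emb.strictMono hlt
  have hσle : ∀ j1 j2, j1 ≤ j2 → σ j1 ≤ σ j2 := by
    intro j1 j2 h
    have hle : (⟨min j1 m, by omega⟩ : Fin I.card) ≤ ⟨min j2 m, by omega⟩ := by
      simp only [Fin.mk_le_mk]
      omega
    exact emb.monotone hle
  have hσsurj : ∀ i ∈ I, ∃ j ≤ m, σ j = i := by
    intro i hi
    have hmem : i ∈ Set.range emb := by
      rw [hemb, Finset.range_orderEmbOfFin]
      exact_mod_cast hi
    obtain ⟨jf, hjf⟩ := hmem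
    have hjlt := jf.2
    refine ⟨jf.1, by omega, ?_⟩
    have hfe : (⟨min jf.1 m, by omega⟩ : Fin I.card) = jf := Fin.ext (by simp; omega)
    rw [hσ]
    simp only
    rw [hfe, hjf]
  have hσ0 : σ 0 = 0 := by
    obtain ⟨j0, hj0, hj0e⟩ := hσsurj 0 h0I
    have h1 := hσle 0 j0 (by omega)
    omega
  have hσm : σ m = k := by
    obtain ⟨jk, hjk, hjke⟩ := hσsurj k hkI
    have h1 := hσle jk m hjk
    have h2 := (hIk _ (hσI m)).1
    omega
  -- y-facts from the Gao polytope
  have hy' : y ∈ convexHull ℝ {z : Sym2 V → ℝ |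
      ∃ T : Finset (Sym2 V), IsGaoTree G Vc k T ∧ z = chi T} := hy
  have hycut : ∀ i, i ≤ k → (∑ e ∈ cut G (Vc i), y e) = 1 := by
    intro i hik
    refine hull_fun_eq hy' (fun z => ∑ e ∈ cut G (Vc i), z e) (isLinearMap_sumOver _) 1 ?_
    rintro a ⟨T, hT, rfl⟩
    show (∑ e ∈ cut G (Vc i), chi T e) = 1
    rw [sum_chi, hT.2 i hik]
    norm_num
  have hVbc : ∀ b ≤ k, (Vc b)ᶜ.Nonempty := by
    intro b hb
    obtain ⟨z, _, hzn⟩ := Finset.exists_of_ssubset htop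
    exact ⟨z, Finset.mem_compl.2 (fun hc => hzn (hmono b k hb le_rfl hc))⟩
  have hVane : ∀ a, a ≤ k → (Vc a).Nonempty :=
    fun a ha => hne.mono (hmono 0 a (by omega) ha)
  have hydeg : ∀ a b, a < b → b ≤ k →
      (∑ v ∈ Vc b \ Vc a, ∑ e ∈ cut G {v}, y e) = 2 * (((Vc b \ Vc a).card : ℝ)) := by
    intro a b hab hbk
    refine hull_fun_eq hy' (fun z => ∑ v ∈ Vc b \ Vc a, ∑ e ∈ cut G {v}, z e)
      (isLinearMap_doubleSum _ _) _ ?_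
    rintro z ⟨T, hT, rfl⟩
    show (∑ v ∈ Vc b \ Vc a, ∑ e ∈ cut G {v}, chi T e) = 2 * (((Vc b \ Vc a).card : ℝ))
    have hgd := gao_deg G T hT.1.1 hT.1.2 (Vc a) (Vc b) (hmono a b (le_of_lt hab) hbk)
      (hVane a (by omega)) (hVbc b hbk) (hT.2 a (by omega)) (hT.2 b hbk)
    calc ∑ v ∈ Vc b \ Vc a, ∑ e ∈ cut G {v}, chi T e
        = ∑ v ∈ Vc b \ Vc a, ((T ∩ cut G {v}).card : ℝ) :=
          Finset.sum_congr rfl fun v _ => sum_chi T _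
      _ = ((∑ v ∈ Vc b \ Vc a, (T ∩ cut G {v}).card : ℕ) : ℝ) := by push_cast; rfl
      _ = 2 * ((Vc b \ Vc a).card : ℝ) := by rw [hgd]; push_cast; ring
  -- x-level sums over blocks
  have hxS : ∀ a b, a < b → b ≤ k →
      (∑ v ∈ Vc b \ Vc a, ∑ e ∈ cut G {v}, x e) = 2 * (((Vc b \ Vc a).card : ℝ)) := by
    intro a b hab hbk
    have key : ∀ d, a + d ≤ k → (∑ v ∈ Vc (a+d) \ Vc a, ∑ e ∈ cut G {v}, x e)
        = 2 * (((Vc (a+d) \ Vc a).card : ℝ)) := by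
      intro d
      induction d with
      | zero => intro _; simp
      | succ d ih =>
        intro hdk
        have hsub1 : Vc a ⊆ Vc (a+d) := hmono a (a+d) (by omega) (by omega)
        have hsub2 : Vc (a+d) ⊆ Vc (a+d+1) := (hchain (a+d) (by omega)).subset
        have hsplit : Vc (a+d+1) \ Vc a
            = (Vc (a+d+1) \ Vc (a+d)) ∪ (Vc (a+d) \ Vc a) := by
          ext v
          simp only [Finset.mem_sdiff, Finset.mem_union]
          constructor
          · rintro ⟨h1, h2⟩
            by_cases hv : v ∈ Vc (a+d)
            · exact Or.inr ⟨hv, h2⟩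
            · exact Or.inl ⟨h1, hv⟩
          · rintro (⟨h1, h2⟩ | ⟨h1, h2⟩)
            · exact ⟨h1, fun hc => h2 (hsub1 hc)⟩
            · exact ⟨hsub2 h1, h2⟩
        have hdisj : Disjoint (Vc (a+d+1) \ Vc (a+d)) (Vc (a+d) \ Vc a) := by
          rw [Finset.disjoint_left]
          intro v hv1 hv2
          exact (Finset.mem_sdiff.1 hv1).2 (Finset.mem_sdiff.1 hv2).1
        have hlev := hxlev (a+d+1) (by omega) (by omega)
        have hleveq : level Vc k (a+d+1) = Vc (a+d+1) \ Vc (a+d) := by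
          simp only [level]
          rw [if_neg (by omega : ¬(a+d+1 = 0)), if_pos (by omega : a+d+1 ≤ k)]
          have h1 : a+d+1-1 = a+d := by omega
          rw [h1]
        rw [hleveq] at hlev
        have hgoal : (∑ v ∈ Vc (a+d+1) \ Vc a, ∑ e ∈ cut G {v}, x e)
            = 2 * (((Vc (a+d+1) \ Vc a).card : ℝ)) := by
          rw [hsplit, Finset.sum_union hdisj, Finset.card_union_of_disjoint hdisj,
            ih (by omega), hlev]
          push_cast
          ring
        exact hgoal
    have := key (b - a) (by omega)
    rwa [show a + (b - a) = b by omega] at this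
  -- transferring sums along the convex combination
  have hsum_comb : ∀ F : Finset (Sym2 V), (∑ e ∈ F, x e)
      = ε * (∑ e ∈ F, y e) + (1-ε) * (∑ e ∈ F, x' e) := by
    intro F
    rw [hcomb]
    simp [Finset.sum_add_distrib, Finset.mul_sum]
  have hdd : ∀ (S : Finset V), (∑ v ∈ S, ∑ e ∈ cut G {v}, x e)
      = ε * (∑ v ∈ S, ∑ e ∈ cut G {v}, y e)
        + (1-ε) * (∑ v ∈ S, ∑ e ∈ cut G {v}, x' e) := by
    intro S
    rw [Finset.sum_congr rfl fun v _ => hsum_comb (cut G {v}), Finset.sum_add_distrib]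
    rw [← Finset.mul_sum, ← Finset.mul_sum]
  have hcancel : ∀ {A B : ℝ}, A = ε * A + (1-ε) * B → B = A := by
    intro A B h
    have e1 : (1-ε) * B = A - ε * A := by linarith
    have e2 : A - ε * A = (1-ε) * A := by ring
    rw [e2] at e1
    exact mul_left_cancel₀ (ne_of_gt h1pos) e1
  have hx'cut1 : ∀ i, i ≤ k → (∑ e ∈ cut G (Vc i), x e) = 1 →
      (∑ e ∈ cut G (Vc i), x' e) = 1 := by
    intro i hik hxi
    have h := hsum_comb (cut G (Vc i))
    rw [hxi, hycut i hik] at h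
    exact hcancel h
  have hx'cutlt : ∀ i ∈ I, (∑ e ∈ cut G (Vc i), x' e) < 2 := by
    intro i hi
    obtain ⟨hik, hlt⟩ := hIk i hi
    have h := hsum_comb (cut G (Vc i))
    rw [hycut i hik, mul_one] at h
    have h2 : (1-ε) * (∑ e ∈ cut G (Vc i), x' e) < 2 - 2*ε := by linarith
    have h3 : (2:ℝ) - 2*ε = (1-ε) * 2 := by ring
    rw [h3] at h2
    exact (mul_lt_mul_iff_right₀ h1pos).1 h2
  have hx'lev : ∀ a b, a < b → b ≤ k →
      (∑ v ∈ Vc b \ Vc a, ∑ e ∈ cut G {v}, x' e) = 2 * (((Vc b \ Vc a).card : ℝ)) := by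
    intro a b hab hbk
    have h := hdd (Vc b \ Vc a)
    rw [hxS a b hab hbk, hydeg a b hab hbk] at h
    exact hcancel h
  -- assembling the result
  refine ⟨m, σ, hσmono, fun j _ => hIk _ (hσI j), ?_, hx', ?_, ?_, ?_, ?_⟩
  · intro i hik hlt
    refine hσsurj i ?_
    rw [hI, Finset.mem_filter, Finset.mem_range]
    exact ⟨by omega, hlt⟩
  · show (∑ e ∈ cut G (Vc (σ 0)), x' e) = 1
    rw [hσ0]
    exact hx'cut1 0 (by omega) hx0
  · show (∑ e ∈ cut G (Vc (σ m)), x' e) = 1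
    rw [hσm]
    exact hx'cut1 k le_rfl hxk
  · intro i h1 h2
    exact hx'cutlt _ (hσI i)
  · intro i h1 h2
    have hleveq : level (fun j => Vc (σ j)) m i = Vc (σ i) \ Vc (σ (i-1)) := by
      simp only [level]
      rw [if_neg (by omega : ¬(i = 0)), if_pos h2]
    have hstep : σ (i-1) < σ i := by
      have := hσmono (i-1) (by omega)
      rwa [show i - 1 + 1 = i from by omega] at this
    have hbk : σ i ≤ k := (hIk _ (hσI i)).1
    rw [hleveq]
    exact hx'lev _ _ hstep hbk
end

section
/- Let M_1 and M_2 be matroids on the same finite ground set E with rank functions r_1 and r_2, and let P_i be the convex hull in ℝ^E of the characteristic vectors of independent sets of M_i (i = 1,2). Let w ∈ ℝ^E with w ≥ 0 and let λ_1, λ_2 ≥ 0 be reals. Then there exist x_1 ∈ P_1 and x_2 ∈ P_2 with λ_1·x_1 + λ_2·x_2 = w if and only if λ_1·r_1(X) + λ_2·r_2(X) ≥ w(X) for all X ⊆ E. -/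
open Finset
open scoped Classical

variable {V : Type*} [Fintype V]

/-!
The pairs `(x₁, x₂)` exist exactly when `w` lies in the Minkowski combination
`l₁ • P₁ + l₂ • P₂`, which is the convex hull of the finite set of vectors `l₁ χ_I + l₂ χ_J`
(`I` independent in `M₁`, `J` in `M₂`). Every such vector satisfies the rank inequalities, and
they cut out a convex set. Conversely, if `w` is outside the hull, some `c` separates it. Choose
independent sets `Bᵢ ⊆ {c > 0}` greedily, so that `Bᵢ` meets every superlevel set `{c > t}` in
`rᵢ({c > t})` elements. Abel summation over the superlevel sets of `c` then turns the rank
inequalities into `c · w ≤ c · (l₁ χ_{B₁} + l₂ χ_{B₂})`, contradicting the separation.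
-/

open scoped Pointwise

namespace Finset

theorem sum_mul_le_sum_mul_of_sum_filter_lt_le {ι : Type*} (s : Finset ι) {c u v : ι → ℝ}
    (hc : ∀ i ∈ s, 0 ≤ c i)
    (huv : ∀ t, 0 ≤ t → ∑ i ∈ s with t < c i, u i ≤ ∑ i ∈ s with t < c i, v i) :
    ∑ i ∈ s, c i * u i ≤ ∑ i ∈ s, c i * v i := by
  induction s using Finset.strongInduction generalizing c with
  | H s ih =>
  rcases s.eq_empty_or_nonempty with rfl | hne
  · simp
  obtain ⟨m, hm, hmin⟩ := s.exists_min_image c hne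
  have split (f : ι → ℝ) : ∑ i ∈ s, c i * f i =
      c m * ∑ i ∈ s, f i + ∑ i ∈ s.erase m, (c i - c m) * f i := by
    rw [sum_erase s (by rw [sub_self, zero_mul]), mul_sum, ← sum_add_distrib]
    exact sum_congr rfl fun i _ => by ring
  have hbottom : c m * ∑ i ∈ s, u i ≤ c m * ∑ i ∈ s, v i := by
    rcases (hc m hm).eq_or_lt with h0 | hpos
    · simp [← h0]
    · have hs : {i ∈ s | 0 < c i} = s := filter_true_of_mem fun i hi => hpos.trans_le (hmin i hi)
      exact mul_le_mul_of_nonneg_left (hs ▸ huv 0 le_rfl) hpos.le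
  have hupper : ∑ i ∈ s.erase m, (c i - c m) * u i ≤ ∑ i ∈ s.erase m, (c i - c m) * v i := by
    refine ih _ (erase_ssubset hm) (fun i hi => sub_nonneg.2 (hmin i (mem_of_mem_erase hi)))
      fun t ht => ?_
    have hlevel : {i ∈ s.erase m | t < c i - c m} = {i ∈ s | t + c m < c i} := by
      ext i
      simp only [mem_filter, mem_erase]
      constructor
      · rintro ⟨⟨-, hi⟩, h⟩
        exact ⟨hi, by linarith⟩
      · rintro ⟨hi, h⟩
        exact ⟨⟨by rintro rfl; linarith, hi⟩, by linarith⟩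
    rw [hlevel]
    exact huv _ (add_nonneg ht (hc m hm))
  rw [split u, split v]
  exact add_le_add hbottom hupper

end Finset

theorem mem_convexHull_of_forall_exists_sum_mul_le {ι : Type*} [Fintype ι] {S : Set (ι → ℝ)}
    (hS : S.Finite) {w : ι → ℝ} (h : ∀ c : ι → ℝ, ∃ z ∈ S, ∑ i, c i * w i ≤ ∑ i, c i * z i) :
    w ∈ convexHull ℝ S := by
  by_contra hw
  obtain ⟨f, u, hfS, hfw⟩ :=
    geometric_hahn_banach_closed_point (convex_convexHull ℝ S)
      (hS.isClosed_convexHull (𝕜 := ℝ)) hw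
  have hf (x : ι → ℝ) : f x = ∑ i, f (fun j => if i = j then 1 else 0) * x i := by
    rw [show f x = (f : (ι → ℝ) →ₗ[ℝ] ℝ) x from rfl, LinearMap.pi_apply_eq_sum_univ]
    exact sum_congr rfl fun i _ => mul_comm _ _
  obtain ⟨z, hz, hwz⟩ := h fun i => f fun j => if i = j then 1 else 0
  have hfz := hfS z (subset_convexHull ℝ S hz)
  rw [hf] at hfz hfw
  linarith

section Matroid

variable {E : Type*}

noncomputable def charVec (I : Finset E) : E → ℝ := fun e => if e ∈ I then 1 else 0

theorem sum_charVec (X I : Finset E) : ∑ e ∈ X, charVec I e = #(X ∩ I) := by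
  simp [charVec]

theorem sum_charVec_smul_add_smul {l₁ l₂ : ℝ} (X B₁ B₂ : Finset E) :
    ∑ e ∈ X, (l₁ • charVec B₁ + l₂ • charVec B₂) e = l₁ * #(X ∩ B₁) + l₂ * #(X ∩ B₂) := by
  simp [sum_add_distrib, ← mul_sum, sum_charVec]

variable [Fintype E] {M : Matroid E}

theorem card_le_mrank {I X : Finset E} (hI : M.Indep ↑I) (hIX : I ⊆ X) : #I ≤ mrank M X :=
  le_sup (f := card) (mem_filter.2 ⟨mem_powerset.2 hIX, hI⟩)

theorem mrank_le_card_of_isBasis' {B X : Finset E} (hB : M.IsBasis' ↑B ↑X) : mrank M X ≤ #B := by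
  refine Finset.sup_le fun I hI => ?_
  rw [mem_filter, mem_powerset] at hI
  have h := (hI.2.encard_le_eRk_of_subset (coe_subset.2 hI.1)).trans_eq hB.encard_eq_eRk.symm
  rwa [Set.encard_coe_eq_coe_finsetCard, Set.encard_coe_eq_coe_finsetCard, Nat.cast_le] at h

theorem Matroid.Indep.exists_superset_mrank_le_card {I X : Finset E} (hI : M.Indep ↑I)
    (hIX : I ⊆ X) : ∃ B, I ⊆ B ∧ B ⊆ X ∧ M.Indep ↑B ∧ mrank M X ≤ #B := by
  obtain ⟨J, hJ, hIJ⟩ := hI.subset_isBasis'_of_subset (coe_subset.2 hIX)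
  lift J to Finset E using X.finite_toSet.subset hJ.subset
  exact ⟨J, coe_subset.1 hIJ, coe_subset.1 hJ.subset, hJ.indep, mrank_le_card_of_isBasis' hJ⟩

/-- The greedy algorithm: scanning `P` by decreasing `c`, keep an element whenever it preserves
independence. -/
theorem Matroid.exists_indep_forall_mrank_filter_lt_le (M : Matroid E) (c : E → ℝ)
    (P : Finset E) :
    ∃ B ⊆ P, M.Indep ↑B ∧ ∀ t, mrank M {e ∈ P | t < c e} ≤ #({e ∈ P | t < c e} ∩ B) := by
  induction P using Finset.strongInduction with
  | H P ih =>
  rcases P.eq_empty_or_nonempty with rfl | hne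
  · exact ⟨∅, subset_rfl, by simp, fun t => by simp [mrank]⟩
  obtain ⟨m, hm, hmin⟩ := P.exists_min_image c hne
  obtain ⟨B', hB'P, hB', hB'rank⟩ :=
    ih {e ∈ P | c m < c e} (filter_ssubset.2 ⟨m, hm, lt_irrefl _⟩)
  obtain ⟨B, hB'B, hBP, hB, hrank⟩ :=
    hB'.exists_superset_mrank_le_card (hB'P.trans (filter_subset _ P))
  refine ⟨B, hBP, hB, fun t => ?_⟩
  rcases lt_or_ge t (c m) with ht | ht
  · have hP : {e ∈ P | t < c e} = P := filter_true_of_mem fun e he => ht.trans_le (hmin e he)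
    rwa [hP, inter_eq_right.2 hBP]
  · have hP : {e ∈ P | t < c e} = {e ∈ {e ∈ P | c m < c e} | t < c e} := by
      rw [filter_filter]
      exact filter_congr fun e _ => ⟨fun h => ⟨ht.trans_lt h, h⟩, And.right⟩
    rw [hP]
    exact (hB'rank t).trans (card_le_card (inter_subset_inter_left hB'B))

def indepCharVecs (M : Matroid E) : Set (E → ℝ) :=
  {x | ∃ I : Finset E, M.Indep ↑I ∧ x = charVec I}

theorem finite_indepCharVecs (M : Matroid E) : (indepCharVecs M).Finite :=
  (Set.finite_range charVec).subset (by rintro _ ⟨I, -, rfl⟩; exact ⟨I, rfl⟩)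

theorem exists_mem_indepPolytope_iff_mem_convexHull (M₁ M₂ : Matroid E) (w : E → ℝ)
    (l₁ l₂ : ℝ) :
    (∃ x₁ ∈ indepPolytope M₁, ∃ x₂ ∈ indepPolytope M₂, (fun e => l₁ * x₁ e + l₂ * x₂ e) = w) ↔
      w ∈ convexHull ℝ (l₁ • indepCharVecs M₁ + l₂ • indepCharVecs M₂) := by
  rw [convexHull_add, convexHull_smul, convexHull_smul]
  constructor
  · rintro ⟨x₁, hx₁, x₂, hx₂, rfl⟩
    exact ⟨_, ⟨x₁, hx₁, rfl⟩, _, ⟨x₂, hx₂, rfl⟩, rfl⟩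
  · rintro ⟨_, ⟨x₁, hx₁, rfl⟩, _, ⟨x₂, hx₂, rfl⟩, rfl⟩
    exact ⟨x₁, hx₁, x₂, hx₂, rfl⟩

variable {M₁ M₂ : Matroid E} {w : E → ℝ} {l₁ l₂ : ℝ}

theorem sum_le_mrank_of_mem_convexHull (hl₁ : 0 ≤ l₁) (hl₂ : 0 ≤ l₂)
    (hw : w ∈ convexHull ℝ (l₁ • indepCharVecs M₁ + l₂ • indepCharVecs M₂)) (X : Finset E) :
    ∑ e ∈ X, w e ≤ l₁ * mrank M₁ X + l₂ * mrank M₂ X := by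
  have hlin : IsLinearMap ℝ fun y : E → ℝ => ∑ e ∈ X, y e :=
    ⟨fun y z => sum_add_distrib, fun a y => (mul_sum X y a).symm⟩
  refine convexHull_min ?_ (convex_halfSpace_le hlin _) hw
  rintro _ ⟨_, ⟨_, ⟨I₁, hI₁, rfl⟩, rfl⟩, _, ⟨_, ⟨I₂, hI₂, rfl⟩, rfl⟩, rfl⟩
  rw [Set.mem_ofPred_eq, sum_charVec_smul_add_smul]
  gcongr
  · exact card_le_mrank (hI₁.subset (coe_subset.2 inter_subset_right)) inter_subset_left
  · exact card_le_mrank (hI₂.subset (coe_subset.2 inter_subset_right)) inter_subset_left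

theorem exists_mem_sum_mul_le_of_forall_sum_le_mrank (hw : ∀ e, 0 ≤ w e) (hl₁ : 0 ≤ l₁)
    (hl₂ : 0 ≤ l₂) (hX : ∀ X : Finset E, ∑ e ∈ X, w e ≤ l₁ * mrank M₁ X + l₂ * mrank M₂ X)
    (c : E → ℝ) :
    ∃ z ∈ l₁ • indepCharVecs M₁ + l₂ • indepCharVecs M₂, ∑ e, c e * w e ≤ ∑ e, c e * z e := by
  set P : Finset E := {e | 0 < c e}
  obtain ⟨B₁, hB₁P, hB₁, hB₁rank⟩ := M₁.exists_indep_forall_mrank_filter_lt_le c P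
  obtain ⟨B₂, hB₂P, hB₂, hB₂rank⟩ := M₂.exists_indep_forall_mrank_filter_lt_le c P
  set z := l₁ • charVec B₁ + l₂ • charVec B₂
  have hz : ∀ e ∉ P, z e = 0 := fun e he => by
    have h₁ : e ∉ B₁ := fun h => he (hB₁P h)
    have h₂ : e ∉ B₂ := fun h => he (hB₂P h)
    simp [z, charVec, h₁, h₂]
  refine ⟨z, Set.add_mem_add (Set.smul_mem_smul_set ⟨B₁, hB₁, rfl⟩)
    (Set.smul_mem_smul_set ⟨B₂, hB₂, rfl⟩), ?_⟩
  calc ∑ e, c e * w e ≤ ∑ e ∈ P, c e * w e := by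
        rw [sum_filter]
        refine sum_le_sum fun e _ => ?_
        split_ifs with hce
        exacts [le_rfl, mul_nonpos_of_nonpos_of_nonneg (not_lt.1 hce) (hw e)]
    _ ≤ ∑ e ∈ P, c e * z e := by
        refine sum_mul_le_sum_mul_of_sum_filter_lt_le P (fun e he => (mem_filter.1 he).2.le)
          fun t _ => ?_
        rw [sum_charVec_smul_add_smul]
        refine (hX _).trans ?_
        gcongr
        exacts [hB₁rank t, hB₂rank t]
    _ = ∑ e, c e * z e := sum_subset (subset_univ P) fun e _ he => by rw [hz e he, mul_zero]

end Matroid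

theorem stmt3_general {E : Type*} [Fintype E] (M₁ M₂ : Matroid E)
    (w : E → ℝ) (hw : ∀ e, 0 ≤ w e)
    (l₁ l₂ : ℝ) (hl₁ : 0 ≤ l₁) (hl₂ : 0 ≤ l₂) :
    (∃ x₁ ∈ indepPolytope M₁, ∃ x₂ ∈ indepPolytope M₂,
      (fun e => l₁ * x₁ e + l₂ * x₂ e) = w) ↔
    ∀ X : Finset E, l₁ * (mrank M₁ X : ℝ) + l₂ * (mrank M₂ X : ℝ) ≥ ∑ e ∈ X, w e := by
  rw [exists_mem_indepPolytope_iff_mem_convexHull]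
  refine ⟨sum_le_mrank_of_mem_convexHull hl₁ hl₂, fun hX => ?_⟩
  exact mem_convexHull_of_forall_exists_sum_mul_le
    ((finite_indepCharVecs M₁).smul_set.add (finite_indepCharVecs M₂).smul_set)
    (exists_mem_sum_mul_le_of_forall_sum_le_mrank hw hl₁ hl₂ hX)

theorem stmt3 {E : Type*} [Fintype E] (M₁ M₂ : Matroid E)
    (h₁ : M₁.E = Set.univ) (h₂ : M₂.E = Set.univ)
    (w : E → ℝ) (hw : ∀ e, 0 ≤ w e)
    (l₁ l₂ : ℝ) (hl₁ : 0 ≤ l₁) (hl₂ : 0 ≤ l₂) :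
    (∃ x₁ ∈ indepPolytope M₁, ∃ x₂ ∈ indepPolytope M₂,
      (fun e => l₁ * x₁ e + l₂ * x₂ e) = w) ↔
    ∀ X : Finset E, l₁ * (mrank M₁ X : ℝ) + l₂ * (mrank M₂ X : ℝ) ≥ ∑ e ∈ X, w e :=
  stmt3_general M₁ M₂ w hw l₁ l₂ hl₁ hl₂
end

section
/- Let x be a chain-point for the chain V_0 ⊊ V_1 ⊊ … ⊊ V_k, let U ⊆ V satisfy x(E(U)) = |U| − 1, let a, b ∈ ℕ with 0 ≤ a ≤ b ≤ k+1, and set S := L_a ∪ L_{a+1} ∪ … ∪ L_b. Then there exists a spanning tree T of G with x_e > 0 for every e ∈ T such that T ∩ E(S ∩ U) is the edge set of a spanning tree of the induced subgraph G(S ∩ U); in particular, the subgraph of G induced on S ∩ U restricted to edges in the support of x is connected. -/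
/-!
Write `x` as a convex combination of spanning trees. Each tree has at most `|W| - 1` edges inside
a nonempty `W`, so `x(E(W)) ≤ |W| - 1`; equality for `U` makes every tree of positive weight tight
on `U`.

The degree deficit `d(W) = ∑_{v ∈ W} (2 - x(δ(v))) = 2|W| - 2x(E(W)) - x(δ(W))` is additive, equals
`2` on `V`, vanishes on the middle levels and is at least `1` on `V_0` and on `V \ V_k`, whose cuts
have value `1`; hence `d(V_j) = d(V \ V_j) = 1` for all `j ≤ k`. As `S` is the complement of
`V_{a-1} ∪ (V \ V_b)` (either part possibly empty) and `x(δ(V_j)) < 2`, this gives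
`d(S) + x(δ(S)) < 4`, that is `x(E(S)) > |S| - 2`. So some tree of positive weight is tight on `S`
as well as on `U`, and since it has at most `|S ∪ U| - 1` edges inside `S ∪ U` it is also tight on
`S ∩ U`, where its edges then form a spanning tree.
-/

open Finset
open scoped Classical

variable {V : Type*} [Fintype V]

namespace SimpleGraph

section
variable {α : Type*} [Fintype α] {H : SimpleGraph α} [Fintype H.edgeSet]

lemma IsAcyclic.card_edgeFinset_add_one_le [Nonempty α] (hH : H.IsAcyclic) :
    #H.edgeFinset + 1 ≤ Fintype.card α := by
  obtain ⟨T, hHT, -, hT⟩ := connected_top.exists_isTree_le_of_le_of_isAcyclic le_top hH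
  rw [← hT.card_edgeFinset]
  gcongr

lemma IsAcyclic.connected_of_card_edgeFinset_add_one_eq [Nonempty α] (hH : H.IsAcyclic)
    (hcard : #H.edgeFinset + 1 = Fintype.card α) : H.Connected := by
  obtain ⟨T, hHT, -, hT⟩ := connected_top.exists_isTree_le_of_le_of_isAcyclic le_top hH
  have hedges : H.edgeFinset = T.edgeFinset :=
    eq_of_subset_of_card_le (edgeFinset_mono hHT) (by rw [← hT.card_edgeFinset] at hcard; omega)
  rw [edgeFinset_inj.1 hedges]
  exact hT.connected

end

variable {K : SimpleGraph V} [Fintype K.edgeSet] {W : Finset V}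

lemma IsAcyclic.card_edgeFinset_add_one_le_of_support_subset (hK : K.IsAcyclic)
    (hW : W.Nonempty) (hKW : K.support ⊆ W) : #K.edgeFinset + 1 ≤ #W := by
  have : Nonempty (W : Set V) := hW.to_subtype
  convert (hK.induce (W : Set V)).card_edgeFinset_add_one_le using 2
  · convert (card_edgeFinset_induce_of_support_subset hKW).symm
  · simp

lemma IsAcyclic.reachable_of_card_edgeFinset_add_one_eq (hK : K.IsAcyclic)
    (hKW : K.support ⊆ W) (hcard : #K.edgeFinset + 1 = #W) {u v : V} (hu : u ∈ W)
    (hv : v ∈ W) : K.Reachable u v := by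
  have : Nonempty (W : Set V) := ⟨⟨u, hu⟩⟩
  have hconn := (hK.induce (W : Set V)).connected_of_card_edgeFinset_add_one_eq
    (by convert hcard using 2
        · convert card_edgeFinset_induce_of_support_subset hKW
        · simp)
  exact (hconn.preconnected ⟨u, hu⟩ ⟨v, hv⟩).map (Embedding.induce _).toHom

end SimpleGraph

section EdgeSets

variable {α : Type*} {G : SimpleGraph α} {T F : Finset (Sym2 α)}

lemma card_edgeFinset_fromEdgeSet [Fintype (SimpleGraph.fromEdgeSet (F : Set (Sym2 α))).edgeSet]
    (hF : (F : Set (Sym2 α)) ⊆ G.edgeSet) :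
    #(SimpleGraph.fromEdgeSet (F : Set (Sym2 α))).edgeFinset = #F := by
  congr 1
  ext e
  simp only [SimpleGraph.mem_edgeFinset, SimpleGraph.edgeSet_fromEdgeSet, Set.mem_sdiff,
    mem_coe, and_iff_left_iff_imp]
  exact fun he => G.not_isDiag_of_mem_edgeSet (hF he)

lemma IsSpanningTree.isAcyclic_fromEdgeSet (hT : IsSpanningTree G T) (hFT : F ⊆ T) :
    (SimpleGraph.fromEdgeSet (F : Set (Sym2 α))).IsAcyclic :=
  hT.2.isAcyclic.anti (SimpleGraph.fromEdgeSet_mono (coe_subset.2 hFT))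

end EdgeSets

section SpanningTree

variable {G : SimpleGraph V} {T F : Finset (Sym2 V)} {W S U : Finset V}

lemma inducedEdges_mono (h : S ⊆ U) : inducedEdges G S ⊆ inducedEdges G U :=
  monotone_filter_right _ fun _ _ hS v hv => h (hS v hv)

lemma inducedEdges_inter : inducedEdges G (S ∩ U) = inducedEdges G S ∩ inducedEdges G U := by
  ext e
  simp only [inducedEdges, mem_inter, mem_filter]
  grind

lemma coe_subset_edgeSet_of_subset_inducedEdges (hFW : F ⊆ inducedEdges G W) :
    (F : Set (Sym2 V)) ⊆ G.edgeSet :=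
  fun _ he => SimpleGraph.mem_edgeFinset.1 (mem_filter.1 (hFW he)).1

lemma support_fromEdgeSet_subset (hFW : F ⊆ inducedEdges G W) :
    (SimpleGraph.fromEdgeSet (F : Set (Sym2 V))).support ⊆ W := by
  rintro v ⟨w, hvw⟩
  exact (mem_filter.1 (hFW (SimpleGraph.fromEdgeSet_adj _ |>.1 hvw).1)).2 v (Sym2.mem_mk_left v w)

lemma IsSpanningTree.card_add_one_le (hT : IsSpanningTree G T) (hFT : F ⊆ T)
    (hFW : F ⊆ inducedEdges G W) (hW : W.Nonempty) : #F + 1 ≤ #W := by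
  have h := (hT.isAcyclic_fromEdgeSet hFT).card_edgeFinset_add_one_le_of_support_subset hW
    (support_fromEdgeSet_subset hFW)
  rwa [card_edgeFinset_fromEdgeSet (coe_subset_edgeSet_of_subset_inducedEdges hFW)] at h

lemma IsSpanningTree.isSpanningTreeOfInduced (hT : IsSpanningTree G T)
    (hcard : #(T ∩ inducedEdges G W) + 1 = #W) :
    IsSpanningTreeOfInduced G W (T ∩ inducedEdges G W) := by
  have hFW : T ∩ inducedEdges G W ⊆ inducedEdges G W := inter_subset_right
  refine ⟨coe_subset_edgeSet_of_subset_inducedEdges hFW,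
    fun e he => (mem_filter.1 (hFW he)).2, by omega, fun u hu v hv => ?_⟩
  refine (hT.isAcyclic_fromEdgeSet inter_subset_left).reachable_of_card_edgeFinset_add_one_eq
    (support_fromEdgeSet_subset hFW) ?_ hu hv
  rwa [card_edgeFinset_fromEdgeSet (coe_subset_edgeSet_of_subset_inducedEdges hFW)]

lemma IsSpanningTree.card_inter_inducedEdges_inter_add_one (hT : IsSpanningTree G T)
    (hS : #(T ∩ inducedEdges G S) + 1 = #S) (hU : #(T ∩ inducedEdges G U) + 1 = #U)
    (hSU : (S ∩ U).Nonempty) :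
    #(T ∩ inducedEdges G (S ∩ U)) + 1 = #(S ∩ U) := by
  have hunion : #((T ∩ inducedEdges G S) ∪ (T ∩ inducedEdges G U)) + 1 ≤ #(S ∪ U) :=
    hT.card_add_one_le (union_subset inter_subset_left inter_subset_left)
      (union_subset (inter_subset_right.trans (inducedEdges_mono subset_union_left))
        (inter_subset_right.trans (inducedEdges_mono subset_union_right)))
      (hSU.mono (inter_subset_left.trans subset_union_left))
  have hinter : #(T ∩ inducedEdges G (S ∩ U)) + 1 ≤ #(S ∩ U) :=
    hT.card_add_one_le inter_subset_left inter_subset_right hSU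
  have hedges := card_union_add_card_inter (T ∩ inducedEdges G S) (T ∩ inducedEdges G U)
  rw [← inter_inter_distrib_left, ← inducedEdges_inter] at hedges
  have hverts := card_union_add_card_inter S U
  omega

end SpanningTree

section Cuts

variable {G : SimpleGraph V} {x : Sym2 V → ℝ} {W A B : Finset V} {u v : V}

lemma mem_cut : s(u, v) ∈ cut G W ↔ G.Adj u v ∧ (u ∈ W ∧ v ∉ W ∨ v ∈ W ∧ u ∉ W) := by
  simp only [cut, cutBetween, mem_filter, SimpleGraph.mem_edgeFinset, SimpleGraph.mem_edgeSet,
    mem_compl, Sym2.eq_iff]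
  grind

lemma mem_inducedEdges : s(u, v) ∈ inducedEdges G W ↔ G.Adj u v ∧ u ∈ W ∧ v ∈ W := by
  simp [inducedEdges]

lemma cut_empty : cut G ∅ = ∅ := by
  simp [cut, cutBetween]

lemma cut_compl : cut G Wᶜ = cut G W := by
  ext e
  induction e using Sym2.ind
  simp only [mem_cut, mem_compl]
  tauto

lemma cut_union_subset : cut G (A ∪ B) ⊆ cut G A ∪ cut G B := by
  intro e
  induction e using Sym2.ind
  simp only [mem_union, mem_cut]
  tauto

lemma cut_singleton : cut G {v} = G.edgeFinset.filter (v ∈ ·) := by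
  ext e
  induction e using Sym2.ind with | _ p q =>
  simp only [mem_cut, mem_filter, mem_singleton, SimpleGraph.mem_edgeFinset,
    SimpleGraph.mem_edgeSet, Sym2.mem_iff]
  have := @SimpleGraph.Adj.ne _ G p q
  grind

lemma inducedEdges_empty : inducedEdges G ∅ = ∅ := by
  ext e
  induction e using Sym2.ind
  simp [mem_inducedEdges]

lemma inducedEdges_univ : inducedEdges G univ = G.edgeFinset := by
  simp [inducedEdges]

lemma sum_sum_cut_singleton :
    ∑ v ∈ W, ∑ e ∈ cut G {v}, x e =
      2 * ∑ e ∈ inducedEdges G W, x e + ∑ e ∈ cut G W, x e := by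
  have hsum : ∀ C ⊆ G.edgeFinset,
      ∑ e ∈ C, x e = ∑ e ∈ G.edgeFinset, if e ∈ C then x e else 0 := fun C hC => by
    rw [sum_ite_mem, inter_eq_right.2 hC]
  rw [hsum (inducedEdges G W) (filter_subset _ _), hsum (cut G W) (filter_subset _ _), mul_sum,
    ← sum_add_distrib]
  simp only [cut_singleton, sum_filter]
  rw [sum_comm]
  refine sum_congr rfl fun e he => ?_
  induction e using Sym2.ind with | _ p q =>
  have hpq : G.Adj p q := SimpleGraph.mem_edgeFinset.1 he
  have hsplit : ∀ v, (if v ∈ s(p, q) then x s(p, q) else 0) =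
      (if p = v then x s(p, q) else 0) + (if q = v then x s(p, q) else 0) := by
    intro v
    have hne := hpq.ne
    simp only [Sym2.mem_iff]
    split_ifs <;> grind
  simp only [hsplit, sum_add_distrib, sum_ite_eq, mem_cut, mem_inducedEdges]
  by_cases hp : p ∈ W <;> by_cases hq : q ∈ W <;> simp [hp, hq, hpq, two_mul]

end Cuts

section ConvexCombination

variable {α : Type*} {G : SimpleGraph α} {x : Sym2 α → ℝ}

lemma exists_convexCombination_of_mem_spanningTreePolytope (hx : x ∈ spanningTreePolytope G) :
    ∃ (ι : Type) (t : Finset ι) (w : ι → ℝ) (T : ι → Finset (Sym2 α)),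
      (∀ i ∈ t, 0 < w i ∧ IsSpanningTree G (T i)) ∧ ∑ i ∈ t, w i = 1 ∧
      ∀ F : Finset (Sym2 α), ∑ e ∈ F, x e = ∑ i ∈ t, w i * #(T i ∩ F) := by
  rw [spanningTreePolytope, _root_.convexHull_eq] at hx
  obtain ⟨ι, t, w, z, hw0, hw1, hz, rfl⟩ := hx
  choose! T hT hzT using hz
  have hpos : ∀ i ∈ t, w i ≠ 0 → 0 < w i := fun i hi h => (hw0 i hi).lt_of_ne' h
  refine ⟨ι, t.filter (0 < w ·), w, T, fun i hi => ?_, ?_, fun F => ?_⟩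
  · obtain ⟨hi, hwi⟩ := mem_filter.1 hi
    exact ⟨hwi, hT i hi⟩
  · rwa [sum_filter_of_ne hpos]
  · rw [sum_filter_of_ne fun i hi h => hpos i hi (left_ne_zero_of_mul h),
      centerMass_eq_of_sum_1 _ _ hw1]
    simp only [Finset.sum_apply, Pi.smul_apply, smul_eq_mul]
    rw [sum_comm]
    refine sum_congr rfl fun i hi => ?_
    rw [hzT i hi, ← mul_sum]
    simp [chi, inter_comm]

lemma pos_of_mem_of_convexCombination {ι : Type} {t : Finset ι} {w : ι → ℝ}
    {T : ι → Finset (Sym2 α)} (hw : ∀ i ∈ t, 0 < w i)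
    (hxT : ∀ F : Finset (Sym2 α), ∑ e ∈ F, x e = ∑ i ∈ t, w i * #(T i ∩ F)) {i : ι} (hi : i ∈ t)
    {e : Sym2 α} (he : e ∈ T i) : 0 < x e := by
  have hxe : x e = ∑ j ∈ t, w j * #(T j ∩ {e}) := by simpa using hxT {e}
  rw [hxe]
  refine sum_pos' (fun j hj => mul_nonneg (hw j hj).le (Nat.cast_nonneg _)) ⟨i, hi, ?_⟩
  simpa [he] using hw i hi

lemma exists_spanningTree_forall_pos (hx : x ∈ spanningTreePolytope G) :
    ∃ T, IsSpanningTree G T ∧ ∀ e ∈ T, 0 < x e := by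
  obtain ⟨ι, t, w, T, hT, hw, hxT⟩ := exists_convexCombination_of_mem_spanningTreePolytope hx
  obtain ⟨i, hi⟩ := nonempty_of_sum_ne_zero (hw ▸ one_ne_zero : ∑ i ∈ t, w i ≠ 0)
  exact ⟨T i, (hT i hi).2,
    fun e => pos_of_mem_of_convexCombination (fun j hj => (hT j hj).1) hxT hi⟩

lemma sum_le_of_mem_spanningTreePolytope (hx : x ∈ spanningTreePolytope G)
    {F : Finset (Sym2 α)} {c : ℝ} (h : ∀ T, IsSpanningTree G T → (#(T ∩ F) : ℝ) ≤ c) :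
    ∑ e ∈ F, x e ≤ c := by
  obtain ⟨ι, t, w, T, hT, hw, hxT⟩ := exists_convexCombination_of_mem_spanningTreePolytope hx
  calc ∑ e ∈ F, x e = ∑ i ∈ t, w i * #(T i ∩ F) := hxT F
    _ ≤ ∑ i ∈ t, w i * c :=
      sum_le_sum fun i hi => mul_le_mul_of_nonneg_left (h _ (hT i hi).2) (hT i hi).1.le
    _ = c := by rw [← sum_mul, hw, one_mul]

lemma le_sum_of_mem_spanningTreePolytope (hx : x ∈ spanningTreePolytope G)
    {F : Finset (Sym2 α)} {c : ℝ} (h : ∀ T, IsSpanningTree G T → c ≤ #(T ∩ F)) :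
    c ≤ ∑ e ∈ F, x e := by
  obtain ⟨ι, t, w, T, hT, hw, hxT⟩ := exists_convexCombination_of_mem_spanningTreePolytope hx
  calc c = ∑ i ∈ t, w i * c := by rw [← sum_mul, hw, one_mul]
    _ ≤ ∑ i ∈ t, w i * #(T i ∩ F) :=
      sum_le_sum fun i hi => mul_le_mul_of_nonneg_left (h _ (hT i hi).2) (hT i hi).1.le
    _ = ∑ e ∈ F, x e := (hxT F).symm

lemma sum_nonneg_of_mem_spanningTreePolytope (hx : x ∈ spanningTreePolytope G)
    (F : Finset (Sym2 α)) : 0 ≤ ∑ e ∈ F, x e :=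
  le_sum_of_mem_spanningTreePolytope hx fun _ _ => Nat.cast_nonneg _

end ConvexCombination

section Polytope

variable {G : SimpleGraph V} {x : Sym2 V → ℝ} {T : Finset (Sym2 V)}

lemma IsSpanningTree.card_add_one (hT : IsSpanningTree G T) : #T + 1 = Fintype.card V := by
  rw [← hT.2.card_edgeFinset, card_edgeFinset_fromEdgeSet hT.1]

lemma sum_edgeFinset_of_mem_spanningTreePolytope (hx : x ∈ spanningTreePolytope G) :
    ∑ e ∈ G.edgeFinset, x e = Fintype.card V - 1 := by
  have hcard : ∀ T, IsSpanningTree G T → (#(T ∩ G.edgeFinset) : ℝ) = Fintype.card V - 1 :=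
    fun T hT => by
      rw [inter_eq_left.2 fun e he => SimpleGraph.mem_edgeFinset.2 (hT.1 he), ← hT.card_add_one]
      push_cast
      ring
  exact le_antisymm (sum_le_of_mem_spanningTreePolytope hx fun T hT => (hcard T hT).le)
    (le_sum_of_mem_spanningTreePolytope hx fun T hT => (hcard T hT).ge)

lemma sum_inducedEdges_le_of_mem_spanningTreePolytope (hx : x ∈ spanningTreePolytope G)
    {W : Finset V} (hW : W.Nonempty) : ∑ e ∈ inducedEdges G W, x e ≤ #W - 1 :=
  sum_le_of_mem_spanningTreePolytope hx fun _ hT => by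
    have := hT.card_add_one_le inter_subset_left inter_subset_right hW
    rw [le_sub_iff_add_le]
    exact_mod_cast this

lemma exists_spanningTree_forall_pos_card_inter_inducedEdges (hx : x ∈ spanningTreePolytope G)
    {S U : Finset V} (hS : S.Nonempty) (hU : U.Nonempty)
    (hxS : (#S : ℝ) - 2 < ∑ e ∈ inducedEdges G S, x e)
    (hxU : (#U : ℝ) - 1 ≤ ∑ e ∈ inducedEdges G U, x e) :
    ∃ T, IsSpanningTree G T ∧ (∀ e ∈ T, 0 < x e) ∧
      #(T ∩ inducedEdges G S) + 1 = #S ∧ #(T ∩ inducedEdges G U) + 1 = #U := by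
  obtain ⟨ι, t, w, T, hT, hw, hxT⟩ := exists_convexCombination_of_mem_spanningTreePolytope hx
  have hlt : ∑ i ∈ t, w i * ((#S + #U : ℝ) - 3) <
      ∑ i ∈ t, w i * ((#(T i ∩ inducedEdges G S) + #(T i ∩ inducedEdges G U) : ℕ) : ℝ) := by
    simp only [Nat.cast_add, mul_add, sum_add_distrib, ← hxT, ← sum_mul, hw, one_mul]
    linarith
  obtain ⟨i, hi, hwi⟩ := exists_lt_of_sum_lt hlt
  have hsum : #S + #U < #(T i ∩ inducedEdges G S) + #(T i ∩ inducedEdges G U) + 3 := by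
    have := lt_of_mul_lt_mul_left hwi (hT i hi).1.le
    rw [← Nat.cast_lt (α := ℝ)]
    push_cast at this ⊢
    linarith
  have hTS := (hT i hi).2.card_add_one_le inter_subset_left inter_subset_right hS
  have hTU := (hT i hi).2.card_add_one_le inter_subset_left inter_subset_right hU
  exact ⟨T i, (hT i hi).2,
    fun e => pos_of_mem_of_convexCombination (fun j hj => (hT j hj).1) hxT hi, by omega, by omega⟩

end Polytope

section Deficit

variable {G : SimpleGraph V} {x : Sym2 V → ℝ} {W A B : Finset V}

noncomputable def degreeDeficit (G : SimpleGraph V) (x : Sym2 V → ℝ) (W : Finset V) : ℝ :=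
  ∑ v ∈ W, (2 - ∑ e ∈ cut G {v}, x e)

lemma degreeDeficit_eq_sub_sum :
    degreeDeficit G x W = 2 * #W - ∑ v ∈ W, ∑ e ∈ cut G {v}, x e := by
  simp [degreeDeficit, sum_sub_distrib, mul_comm]

lemma degreeDeficit_eq :
    degreeDeficit G x W =
      2 * #W - 2 * ∑ e ∈ inducedEdges G W, x e - ∑ e ∈ cut G W, x e := by
  rw [degreeDeficit_eq_sub_sum, sum_sum_cut_singleton]
  ring

lemma degreeDeficit_empty : degreeDeficit G x ∅ = 0 := sum_empty

lemma degreeDeficit_union (h : Disjoint A B) :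
    degreeDeficit G x (A ∪ B) = degreeDeficit G x A + degreeDeficit G x B :=
  sum_union h

lemma degreeDeficit_add_degreeDeficit_compl :
    degreeDeficit G x W + degreeDeficit G x Wᶜ = degreeDeficit G x univ :=
  sum_add_sum_compl W _

lemma degreeDeficit_univ (hx : x ∈ spanningTreePolytope G) : degreeDeficit G x univ = 2 := by
  rw [degreeDeficit_eq, inducedEdges_univ, sum_edgeFinset_of_mem_spanningTreePolytope hx,
    ← compl_empty, cut_compl, cut_empty, compl_empty, card_univ, sum_empty]
  ring

lemma one_le_degreeDeficit (hx : x ∈ spanningTreePolytope G) (hW : ∑ e ∈ cut G W, x e = 1) :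
    1 ≤ degreeDeficit G x W := by
  have hne : W.Nonempty := by
    rw [nonempty_iff_ne_empty]
    rintro rfl
    simp [cut_empty] at hW
  rw [degreeDeficit_eq, hW]
  linarith [sum_inducedEdges_le_of_mem_spanningTreePolytope hx hne]

lemma sub_two_lt_sum_inducedEdges_compl_union (hx : x ∈ spanningTreePolytope G)
    (hAB : Disjoint A B) (hA : ∑ e ∈ cut G A, x e < degreeDeficit G x A + 1)
    (hB : ∑ e ∈ cut G B, x e < degreeDeficit G x B + 1) :
    (#(A ∪ B)ᶜ : ℝ) - 2 < ∑ e ∈ inducedEdges G (A ∪ B)ᶜ, x e := by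
  have hdeficit := degreeDeficit_add_degreeDeficit_compl (G := G) (x := x) (W := A ∪ B)
  rw [degreeDeficit_univ hx, degreeDeficit_union hAB] at hdeficit
  have hcut : ∑ e ∈ cut G (A ∪ B)ᶜ, x e ≤ ∑ e ∈ cut G A, x e + ∑ e ∈ cut G B, x e := by
    rw [cut_compl, ← sum_union_inter]
    calc ∑ e ∈ cut G (A ∪ B), x e ≤ ∑ e ∈ cut G A ∪ cut G B, x e :=
          sum_le_sum_of_subset_of_nonneg cut_union_subset fun e _ _ => by
            simpa using sum_nonneg_of_mem_spanningTreePolytope hx {e}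
      _ ≤ _ := le_add_of_nonneg_right (sum_nonneg_of_mem_spanningTreePolytope hx _)
  rw [degreeDeficit_eq (W := (A ∪ B)ᶜ)] at hdeficit
  linarith

end Deficit

lemma monotoneOn_Iic_of_le_succ {β : Type*} [Preorder β] {f : ℕ → β} {k : ℕ}
    (hf : ∀ i < k, f i ≤ f (i + 1)) : MonotoneOn f (Set.Iic k) :=
  monotoneOn_of_le_succ Set.ordConnected_Iic fun i _ _ hi =>
    hf i (Order.succ_le_iff.1 (Set.mem_Iic.1 hi))

section Levels

variable {Vc : ℕ → Finset V} {k a b i : ℕ} {v : V}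

lemma mem_level_iff (hi : i ≤ k + 1) :
    v ∈ level Vc k i ↔ (i ≤ k → v ∈ Vc i) ∧ (i ≠ 0 → v ∉ Vc (i - 1)) := by
  unfold level
  split_ifs with h0 hk
  · simp [h0]
  · simp [hk, h0]
  · obtain rfl : i = k + 1 := by omega
    simp

lemma mem_biUnion_level_Icc_iff (hchain : ∀ i < k, Vc i ⊆ Vc (i + 1)) (hab : a ≤ b)
    (hb : b ≤ k + 1) :
    v ∈ (Icc a b).biUnion (level Vc k) ↔ (b ≤ k → v ∈ Vc b) ∧ (a ≠ 0 → v ∉ Vc (a - 1)) := by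
  have hmono := monotoneOn_Iic_of_le_succ hchain
  constructor
  · intro hv
    obtain ⟨i, hi, hvi⟩ := mem_biUnion.1 hv
    rw [mem_Icc] at hi
    rw [mem_level_iff (by omega)] at hvi
    refine ⟨fun hbk => hmono (by simp; omega) (by simpa) hi.2 (hvi.1 (by omega)),
      fun ha hva => hvi.2 (by omega) (hmono (by simp; omega) (by simp; omega) ?_ hva)⟩
    omega
  · rintro ⟨hvb, hva⟩
    have hex : ∃ i, a ≤ i ∧ (i ≤ k → v ∈ Vc i) := ⟨b, hab, hvb⟩
    obtain ⟨hai, hvi⟩ := Nat.find_spec hex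
    refine mem_biUnion.2 ⟨Nat.find hex, mem_Icc.2 ⟨hai, Nat.find_min' hex ⟨hab, hvb⟩⟩,
      (mem_level_iff (by have := Nat.find_min' hex ⟨hab, hvb⟩; omega)).2 ⟨hvi, fun h0 hv => ?_⟩⟩
    rcases hai.eq_or_lt with h | h
    · exact hva (by omega) (h ▸ hv)
    · exact Nat.find_min hex (by omega : Nat.find hex - 1 < Nat.find hex) ⟨by omega, fun _ => hv⟩

lemma biUnion_level_Icc_eq_compl (hchain : ∀ i < k, Vc i ⊆ Vc (i + 1)) (hab : a ≤ b)
    (hb : b ≤ k + 1) :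
    (Icc a b).biUnion (level Vc k) =
      ((if a = 0 then ∅ else Vc (a - 1)) ∪ (if b = k + 1 then ∅ else (Vc b)ᶜ))ᶜ := by
  ext v
  have hbk : b ≤ k ↔ b ≠ k + 1 := by omega
  rw [mem_biUnion_level_Icc_iff hchain hab hb, hbk]
  split_ifs <;> simp [*, and_comm]

end Levels

namespace IsChainPoint

variable {G : SimpleGraph V} {Vc : ℕ → Finset V} {k a b i j : ℕ} {x : Sym2 V → ℝ}

lemma cut_lt_two (hx : IsChainPoint G Vc k x) (hj : j ≤ k) : ∑ e ∈ cut G (Vc j), x e < 2 := by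
  obtain ⟨-, h0, hk, hmid, -⟩ := hx
  rcases Nat.eq_zero_or_pos j with rfl | hj0
  · linarith
  rcases hj.eq_or_lt with rfl | hjk
  · linarith
  exact hmid j hj0 (by omega)

lemma degreeDeficit_level (hx : IsChainPoint G Vc k x) (hi1 : 1 ≤ i) (hik : i ≤ k) :
    degreeDeficit G x (level Vc k i) = 0 := by
  obtain ⟨-, -, -, -, hlevel⟩ := hx
  rw [degreeDeficit_eq_sub_sum, hlevel i hi1 hik, sub_self]

lemma degreeDeficit_eq_degreeDeficit_zero (hx : IsChainPoint G Vc k x)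
    (hchain : ∀ i < k, Vc i ⊆ Vc (i + 1)) (hj : j ≤ k) :
    degreeDeficit G x (Vc j) = degreeDeficit G x (Vc 0) := by
  induction j with
  | zero => rfl
  | succ j ih =>
    have hlevel : level Vc k (j + 1) = Vc (j + 1) \ Vc j := by simp [level, hj]
    rw [← union_sdiff_of_subset (hchain j hj), degreeDeficit_union disjoint_sdiff, ← hlevel,
      hx.degreeDeficit_level (by omega) hj, ih (by omega), add_zero]

lemma degreeDeficit_eq_one (hx : IsChainPoint G Vc k x) (hchain : ∀ i < k, Vc i ⊆ Vc (i + 1))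
    (hj : j ≤ k) : degreeDeficit G x (Vc j) = 1 := by
  have h0 := one_le_degreeDeficit hx.1 hx.2.1
  have hk : 1 ≤ degreeDeficit G x (Vc k)ᶜ :=
    one_le_degreeDeficit hx.1 (by rw [cut_compl]; exact hx.2.2.1)
  have hsum := degreeDeficit_add_degreeDeficit_compl (G := G) (x := x) (W := Vc k)
  rw [degreeDeficit_univ hx.1, hx.degreeDeficit_eq_degreeDeficit_zero hchain le_rfl] at hsum
  rw [hx.degreeDeficit_eq_degreeDeficit_zero hchain hj]
  linarith

lemma cut_lt_degreeDeficit_add_one (hx : IsChainPoint G Vc k x)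
    (hchain : ∀ i < k, Vc i ⊆ Vc (i + 1)) (hj : j ≤ k) :
    ∑ e ∈ cut G (Vc j), x e < degreeDeficit G x (Vc j) + 1 := by
  rw [hx.degreeDeficit_eq_one hchain hj]
  linarith [hx.cut_lt_two hj]

lemma cut_compl_lt_degreeDeficit_add_one (hx : IsChainPoint G Vc k x)
    (hchain : ∀ i < k, Vc i ⊆ Vc (i + 1)) (hj : j ≤ k) :
    ∑ e ∈ cut G (Vc j)ᶜ, x e < degreeDeficit G x (Vc j)ᶜ + 1 := by
  have hsum := degreeDeficit_add_degreeDeficit_compl (G := G) (x := x) (W := Vc j)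
  rw [degreeDeficit_univ hx.1, hx.degreeDeficit_eq_one hchain hj] at hsum
  rw [cut_compl]
  linarith [hx.cut_lt_two hj]

lemma sub_two_lt_sum_inducedEdges_biUnion_level (hx : IsChainPoint G Vc k x)
    (hchain : ∀ i < k, Vc i ⊆ Vc (i + 1)) (hab : a ≤ b) (hb : b ≤ k + 1) :
    (#((Icc a b).biUnion (level Vc k)) : ℝ) - 2 <
      ∑ e ∈ inducedEdges G ((Icc a b).biUnion (level Vc k)), x e := by
  rw [biUnion_level_Icc_eq_compl hchain hab hb]
  refine sub_two_lt_sum_inducedEdges_compl_union hx.1 ?_ ?_ ?_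
  · split_ifs
    · simp
    · simp
    · simp
    · exact disjoint_compl_right_iff.2
        (monotoneOn_Iic_of_le_succ hchain (by simp; omega) (by simp; omega) (by omega))
  · split_ifs
    · simp [cut_empty, degreeDeficit_empty]
    · exact hx.cut_lt_degreeDeficit_add_one hchain (by omega)
  · split_ifs
    · simp [cut_empty, degreeDeficit_empty]
    · exact hx.cut_compl_lt_degreeDeficit_add_one hchain (by omega)

end IsChainPoint

theorem stmt6_general (G : SimpleGraph V)
    (Vc : ℕ → Finset V) (k : ℕ)
    (hchain : ∀ i < k, Vc i ⊂ Vc (i + 1))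
    (x : Sym2 V → ℝ) (hx : IsChainPoint G Vc k x)
    (U : Finset V) (hU : (∑ e ∈ inducedEdges G U, x e) = (U.card : ℝ) - 1)
    (a b : ℕ) (hab : a ≤ b) (hb : b ≤ k + 1)
    (S : Finset V) (hS : S = (Finset.Icc a b).biUnion (level Vc k)) :
    (∃ T : Finset (Sym2 V), IsSpanningTree G T ∧ (∀ e ∈ T, 0 < x e) ∧
      IsSpanningTreeOfInduced G (S ∩ U) (T ∩ inducedEdges G (S ∩ U))) ∧
    ∀ u ∈ S ∩ U, ∀ v ∈ S ∩ U,
      (SimpleGraph.fromEdgeSet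
        {e : Sym2 V | e ∈ inducedEdges G (S ∩ U) ∧ 0 < x e}).Reachable u v := by
  obtain ⟨T, hT, hpos, hTSU⟩ : ∃ T, IsSpanningTree G T ∧ (∀ e ∈ T, 0 < x e) ∧
      IsSpanningTreeOfInduced G (S ∩ U) (T ∩ inducedEdges G (S ∩ U)) := by
    rcases (S ∩ U).eq_empty_or_nonempty with hSU | hSU
    · obtain ⟨T, hT, hpos⟩ := exists_spanningTree_forall_pos hx.1
      refine ⟨T, hT, hpos, ?_⟩
      simp [hSU, IsSpanningTreeOfInduced, inducedEdges_empty]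
    have hxS : (#S : ℝ) - 2 < ∑ e ∈ inducedEdges G S, x e :=
      hS ▸ hx.sub_two_lt_sum_inducedEdges_biUnion_level (fun i hi => (hchain i hi).subset) hab hb
    obtain ⟨T, hT, hpos, hTS, hTU⟩ := exists_spanningTree_forall_pos_card_inter_inducedEdges hx.1
      (hSU.mono inter_subset_left) (hSU.mono inter_subset_right) hxS hU.ge
    exact ⟨T, hT, hpos,
      hT.isSpanningTreeOfInduced (hT.card_inter_inducedEdges_inter_add_one hTS hTU hSU)⟩
  refine ⟨⟨T, hT, hpos, hTSU⟩, fun u hu v hv =>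
    (hTSU.2.2.2 u hu v hv).mono (SimpleGraph.fromEdgeSet_mono fun e he => ?_)⟩
  exact ⟨(mem_inter.1 he).2, hpos e (mem_inter.1 he).1⟩

theorem stmt6 (G : SimpleGraph V) (hG : G.Connected)
    (Vc : ℕ → Finset V) (k : ℕ)
    (hne : (Vc 0).Nonempty) (hchain : ∀ i < k, Vc i ⊂ Vc (i + 1))
    (htop : Vc k ⊂ Finset.univ)
    (x : Sym2 V → ℝ) (hx : IsChainPoint G Vc k x)
    (U : Finset V) (hU : (∑ e ∈ inducedEdges G U, x e) = (U.card : ℝ) - 1)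
    (a b : ℕ) (hab : a ≤ b) (hb : b ≤ k + 1)
    (S : Finset V) (hS : S = (Finset.Icc a b).biUnion (level Vc k)) :
    (∃ T : Finset (Sym2 V), IsSpanningTree G T ∧ (∀ e ∈ T, 0 < x e) ∧
      IsSpanningTreeOfInduced G (S ∩ U) (T ∩ inducedEdges G (S ∩ U))) ∧
    ∀ u ∈ S ∩ U, ∀ v ∈ S ∩ U,
      (SimpleGraph.fromEdgeSet
        {e : Sym2 V | e ∈ inducedEdges G (S ∩ U) ∧ 0 < x e}).Reachable u v :=
  stmt6_general G Vc k hchain x hx U hU a b hab hb S hS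
end

section
/- Let G = (V, E) be a finite connected simple graph, s, t ∈ V with s ≠ t, and let x be a solution to the s–t path TSP subtour elimination LP. Write the family {A ⊆ V \ {t} : s ∈ A and x(δ(A)) < 2} as a chain V_0 ⊊ V_1 ⊊ … ⊊ V_k (so V_0 = {s} and V_k = V \ {t}). Then x is a chain-point for this chain, i.e.: (i) x ∈ Sp(G); (ii) x(δ(V_0)) = x(δ(V_k)) = 1 and x(δ(V_i)) < 2 for i = 1,…,k−1; (iii) Σ_{v∈L_i} x(δ(v)) = 2|L_i| for i = 1,…,k, where L_i := V_i \ V_{i−1}. -/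
open Finset
open scoped Classical

variable {V : Type*} [Fintype V]

lemma cut_compl' (G : SimpleGraph V) (S : Finset V) : cut G Sᶜ = cut G S := by
  unfold cut cutBetween
  ext e
  simp only [mem_filter, compl_compl, and_congr_right_iff]
  intro _
  constructor
  · rintro ⟨u, v, rfl, hu, hv⟩
    exact ⟨v, u, Sym2.eq_swap, hv, hu⟩
  · rintro ⟨u, v, rfl, hu, hv⟩
    exact ⟨v, u, Sym2.eq_swap, hv, hu⟩

theorem stmt9 (G : SimpleGraph V) (hG : G.Connected)
    (s t : V) (hst : s ≠ t)
    (x : Sym2 V → ℝ) (hx : IsSubtourLPSolution G s t x)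
    (Vc : ℕ → Finset V) (k : ℕ)
    (hchain : ∀ i < k, Vc i ⊂ Vc (i + 1))
    (hmem : ∀ i ≤ k, s ∈ Vc i ∧ t ∉ Vc i ∧ (∑ e ∈ cut G (Vc i), x e) < 2)
    (hall : ∀ A : Finset V, s ∈ A → t ∉ A → (∑ e ∈ cut G A, x e) < 2 →
      ∃ i ≤ k, A = Vc i) :
    IsChainPoint G Vc k x := by
  obtain ⟨hxSp, hdeg, hs, ht⟩ := hx
  have hmono : ∀ j ≤ k, ∀ i ≤ j, Vc i ⊆ Vc j := by
    intro j
    induction j with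
    | zero =>
      intro _ i hi
      interval_cases i
      exact subset_rfl
    | succ n ih =>
      intro hjk i hi
      rcases Nat.eq_or_lt_of_le hi with rfl | h
      · exact subset_rfl
      · exact (ih (by omega) i (by omega)).trans (hchain n (by omega)).subset
  -- Vc 0 = {s}
  obtain ⟨i0, hi0k, hs0⟩ := hall {s} (mem_singleton_self s)
    (by simp [Ne.symm hst]) (by rw [hs]; norm_num)
  have hVc0 : Vc 0 = {s} := by
    have hsub : Vc 0 ⊆ {s} := hs0 ▸ hmono i0 hi0k 0 (Nat.zero_le _)
    rcases Finset.subset_singleton_iff.mp hsub with h | h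
    · exact absurd ((hmem 0 (Nat.zero_le _)).1) (by simp [h])
    · exact h
  -- Vc k = {t}ᶜ
  have hcutA : (∑ e ∈ cut G ({t} : Finset V)ᶜ, x e) = 1 := by
    rw [cut_compl']; exact ht
  obtain ⟨i1, hi1k, hA⟩ := hall ({t} : Finset V)ᶜ (by simp [hst])
    (by simp) (by rw [hcutA]; norm_num)
  have hVck : Vc k = ({t} : Finset V)ᶜ := by
    apply Finset.Subset.antisymm
    · intro v hv
      simp only [Finset.mem_compl, Finset.mem_singleton]
      rintro rfl
      exact (hmem k le_rfl).2.1 hv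
    · rw [hA]; exact hmono k le_rfl i1 hi1k
  refine ⟨hxSp, ?_, ?_, ?_, ?_⟩
  · rw [hVc0]; exact hs
  · rw [hVck]; exact hcutA
  · intro i h1 h2
    exact (hmem i (by omega)).2.2
  · intro i h1 h2
    have hlev : level Vc k i = Vc i \ Vc (i - 1) := by
      unfold level
      rw [if_neg (by omega), if_pos h2]
    rw [hlev]
    have hconst : ∀ v ∈ Vc i \ Vc (i - 1), (∑ e ∈ cut G {v}, x e) = 2 := by
      intro v hv
      simp only [Finset.mem_sdiff] at hv
      have hvs : v ≠ s := fun h => hv.2 (h ▸ (hmem (i - 1) (by omega)).1)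
      have hvt : v ≠ t := fun h => (hmem i h2).2.1 (h ▸ hv.1)
      exact hdeg v hvs hvt
    rw [Finset.sum_congr rfl hconst, Finset.sum_const, nsmul_eq_mul, mul_comm]
end
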